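/- arXiv:1411.6282 — 5 statements merged into one kernel-verified Lean document; each statement's English description precedes it below -/
import Mathlib

section
/- For the chained form on ℝ^{k+1}, the i-th distribution of the derived flag equals G^i = span{ ∂/∂z_{k-i}, …, ∂/∂z_k, ∂/∂z₀ + z₂ ∂/∂z₁ + ⋯ + z_{k-i} ∂/∂z_{k-i-1} } for every 0 ≤ i ≤ k−1; in particular rank G^i = i + 2 and G^{k-1} = T ℝ^{k+1}. -/
/-- Lie bracket of vector fields on `ι → ℝ`: `[X, Y] = DY·X − DX·Y`. -/
noncomputable def bracket {ι : Type} [Fintype ι] [DecidableEq ι]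
    (X Y : (ι → ℝ) → (ι → ℝ)) : (ι → ℝ) → (ι → ℝ) :=
  fun x => fderiv ℝ Y x (X x) - fderiv ℝ X x (Y x)

/-- The C∞(X)-module of vector fields generated by a set `S` of vector fields. -/
inductive SmoothSpan {ι : Type} [Fintype ι] [DecidableEq ι]
    (S : Set ((ι → ℝ) → (ι → ℝ))) : ((ι → ℝ) → (ι → ℝ)) → Prop
  | of {f : (ι → ℝ) → (ι → ℝ)} (hf : f ∈ S) : SmoothSpan S f
  | zero : SmoothSpan S (fun _ _ => 0)
  | add {f g : (ι → ℝ) → (ι → ℝ)} : SmoothSpan S f → SmoothSpan S g →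
      SmoothSpan S (fun x => f x + g x)
  | smul (h : (ι → ℝ) → ℝ) (hh : ContDiff ℝ (⊤ : ℕ∞) h) {f : (ι → ℝ) → (ι → ℝ)} :
      SmoothSpan S f → SmoothSpan S (fun x i => h x * f x i)

/-- The span, over smooth functions, of a set of vector fields. -/
noncomputable def smoothSpan {ι : Type} [Fintype ι] [DecidableEq ι]
    (S : Set ((ι → ℝ) → (ι → ℝ))) : Set ((ι → ℝ) → (ι → ℝ)) :=
  {f | SmoothSpan S f}

/-- The derived flag: `G⁰ = span S`, `G^{i+1} = G^i + [G^i, G^i]`. -/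
noncomputable def derivedFlag {ι : Type} [Fintype ι] [DecidableEq ι]
    (S : Set ((ι → ℝ) → (ι → ℝ))) : ℕ → Set ((ι → ℝ) → (ι → ℝ))
  | 0 => smoothSpan S
  | i+1 => smoothSpan (derivedFlag S i ∪
      {h | ∃ X ∈ derivedFlag S i, ∃ Y ∈ derivedFlag S i, h = bracket X Y})

/-- The pointwise evaluation of a distribution: the subspace of `ι → ℝ` spanned
by the values at `x` of the vector fields in `D`. -/
noncomputable def ptSpan {ι : Type} [Fintype ι] [DecidableEq ι]
    (D : Set ((ι → ℝ) → (ι → ℝ))) (x : ι → ℝ) : Submodule ℝ (ι → ℝ) :=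
  Submodule.span ℝ {v | ∃ f ∈ D, f x = v}

/-- The characteristic distribution `C = {c ∈ D : [c, D] ⊆ D}`. -/
noncomputable def charDist {ι : Type} [Fintype ι] [DecidableEq ι]
    (D : Set ((ι → ℝ) → (ι → ℝ))) : Set ((ι → ℝ) → (ι → ℝ)) :=
  {c | c ∈ D ∧ ∀ f ∈ D, bracket c f ∈ D}

/-- `g₀ = ∂/∂z₀ + Σ_{i=1}^{k-1} z_{i+1} ∂/∂z_i` on `ℝ^{k+1}`. -/
noncomputable def g0 (k : ℕ) : (Fin (k+1) → ℝ) → (Fin (k+1) → ℝ) :=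
  fun x i => if i.val = 0 then 1 else if h : i.val < k then x ⟨i.val + 1, by omega⟩ else 0

/-- `g₁ = ∂/∂z_k` on `ℝ^{k+1}`. -/
noncomputable def g1 (k : ℕ) : (Fin (k+1) → ℝ) → (Fin (k+1) → ℝ) :=
  fun _ i => if i.val = k then 1 else 0

/-- The coordinate vector field `∂/∂z_j` on `ℝ^{k+1}`. -/
noncomputable def eN (k j : ℕ) : (Fin (k+1) → ℝ) → (Fin (k+1) → ℝ) :=
  fun _ i => if i.val = j then 1 else 0

/-- The truncated field `∂/∂z₀ + z₂ ∂/∂z₁ + ⋯ + z_{k-i} ∂/∂z_{k-i-1}` on `ℝ^{k+1}`. -/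
noncomputable def g0trunc (k i : ℕ) : (Fin (k+1) → ℝ) → (Fin (k+1) → ℝ) :=
  fun x j => if j.val = 0 then 1 else if h : j.val < k - i then x ⟨j.val + 1, by omega⟩ else 0

section Aux

variable {ι : Type} [Fintype ι] [DecidableEq ι]

theorem SmoothSpan.congr {S : Set ((ι → ℝ) → (ι → ℝ))} {f g : (ι → ℝ) → (ι → ℝ)}
    (h : SmoothSpan S f) (hfg : f = g) : SmoothSpan S g := hfg ▸ h

theorem SmoothSpan.smul' {S : Set ((ι → ℝ) → (ι → ℝ))} (h : (ι → ℝ) → ℝ)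
    (hh : ContDiff ℝ (⊤ : ℕ∞) h) {f : (ι → ℝ) → (ι → ℝ)} (hf : SmoothSpan S f) :
    SmoothSpan S (fun x => h x • f x) :=
  (SmoothSpan.smul h hh hf).congr rfl

theorem SmoothSpan.sub {S : Set ((ι → ℝ) → (ι → ℝ))} {f g : (ι → ℝ) → (ι → ℝ)}
    (hf : SmoothSpan S f) (hg : SmoothSpan S g) : SmoothSpan S (fun x => f x - g x) := by
  have := hf.add ((hg.smul (fun _ => (-1:ℝ)) contDiff_const))
  exact this.congr (by funext x j; simp [Pi.add_apply, Pi.sub_apply]; ring)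

theorem SmoothSpan.neg {S : Set ((ι → ℝ) → (ι → ℝ))} {f : (ι → ℝ) → (ι → ℝ)}
    (hf : SmoothSpan S f) : SmoothSpan S (fun x => -(f x)) := by
  have := hf.smul (fun _ => (-1:ℝ)) contDiff_const
  exact this.congr (by funext x j; simp)

theorem SmoothSpan.trans {S T : Set ((ι → ℝ) → (ι → ℝ))} {f : (ι → ℝ) → (ι → ℝ)}
    (hf : SmoothSpan S f) (hST : ∀ g ∈ S, SmoothSpan T g) : SmoothSpan T f := by
  induction hf with
  | of hf => exact hST _ hf
  | zero => exact .zero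
  | add _ _ ih1 ih2 => exact ih1.add ih2
  | smul h hh _ ih => exact ih.smul h hh

theorem smoothSpan_subset {S T : Set ((ι → ℝ) → (ι → ℝ))}
    (h : ∀ g ∈ S, SmoothSpan T g) : smoothSpan S ⊆ smoothSpan T :=
  fun _ hf => SmoothSpan.trans hf h

theorem smooth_of_smoothSpan {S : Set ((ι → ℝ) → (ι → ℝ))} {f : (ι → ℝ) → (ι → ℝ)}
    (hf : SmoothSpan S f) (hS : ∀ g ∈ S, ContDiff ℝ (⊤ : ℕ∞) g) : ContDiff ℝ (⊤ : ℕ∞) f := by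
  induction hf with
  | of hf => exact hS _ hf
  | zero => exact contDiff_const
  | add _ _ ih1 ih2 => exact ih1.add ih2
  | smul h hh _ ih => exact contDiff_pi.2 fun j => hh.mul ((contDiff_pi.1 ih) j)

theorem bracket_self (X : (ι → ℝ) → (ι → ℝ)) : bracket X X = fun _ _ => 0 := by
  funext x j; simp [bracket]

theorem bracket_antisymm (X Y : (ι → ℝ) → (ι → ℝ)) :
    bracket Y X = fun x => -(bracket X Y x) := by
  funext x; simp [bracket, neg_sub]

theorem bracket_zero_left (Y : (ι → ℝ) → (ι → ℝ)) :
    bracket (fun _ _ => (0:ℝ)) Y = fun _ _ => 0 := by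
  funext x j
  have h0 : (fun _ : ι → ℝ => (fun _ : ι => (0:ℝ))) = fun _ => (0 : ι → ℝ) := rfl
  have h1 : (fun _ : ι => (0:ℝ)) = 0 := rfl
  simp [bracket, h0, h1, fderiv_const]

theorem bracket_zero_right (X : (ι → ℝ) → (ι → ℝ)) :
    bracket X (fun _ _ => (0:ℝ)) = fun _ _ => 0 := by
  funext x j
  have h0 : (fun _ : ι → ℝ => (fun _ : ι => (0:ℝ))) = fun _ => (0 : ι → ℝ) := rfl
  have h1 : (fun _ : ι => (0:ℝ)) = 0 := rfl
  simp [bracket, h0, h1, fderiv_const]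

theorem bracket_add_left {f g Y : (ι → ℝ) → (ι → ℝ)}
    (hf : Differentiable ℝ f) (hg : Differentiable ℝ g) :
    bracket (fun x => f x + g x) Y = fun x => bracket f Y x + bracket g Y x := by
  funext x
  simp only [bracket, fderiv_fun_add (hf x) (hg x), map_add, ContinuousLinearMap.add_apply]
  abel

theorem bracket_add_right {X f g : (ι → ℝ) → (ι → ℝ)}
    (hf : Differentiable ℝ f) (hg : Differentiable ℝ g) :
    bracket X (fun x => f x + g x) = fun x => bracket X f x + bracket X g x := by
  funext x
  simp only [bracket, fderiv_fun_add (hf x) (hg x), map_add, ContinuousLinearMap.add_apply]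
  abel

theorem bracket_smul_left {h : (ι → ℝ) → ℝ} {f Y : (ι → ℝ) → (ι → ℝ)}
    (hh : Differentiable ℝ h) (hf : Differentiable ℝ f) :
    bracket (fun x => h x • f x) Y =
      fun x => h x • bracket f Y x - (fderiv ℝ h x (Y x)) • f x := by
  funext x
  simp only [bracket, fderiv_fun_smul (hh x) (hf x), map_smul, ContinuousLinearMap.add_apply,
    ContinuousLinearMap.smul_apply, ContinuousLinearMap.smulRight_apply, smul_sub]
  abel

theorem bracket_smul_right {h : (ι → ℝ) → ℝ} {X f : (ι → ℝ) → (ι → ℝ)}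
    (hh : Differentiable ℝ h) (hf : Differentiable ℝ f) :
    bracket X (fun x => h x • f x) =
      fun x => h x • bracket X f x + (fderiv ℝ h x (X x)) • f x := by
  funext x
  simp only [bracket, fderiv_fun_smul (hh x) (hf x), map_smul, ContinuousLinearMap.add_apply,
    ContinuousLinearMap.smul_apply, ContinuousLinearMap.smulRight_apply, smul_sub]
  abel

theorem fderiv_apply_smooth {h : (ι → ℝ) → ℝ} {Y : (ι → ℝ) → (ι → ℝ)}
    (hh : ContDiff ℝ (⊤ : ℕ∞) h) (hY : ContDiff ℝ (⊤ : ℕ∞) Y) :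
    ContDiff ℝ (⊤ : ℕ∞) (fun x => fderiv ℝ h x (Y x)) :=
  (hh.fderiv_right (by simp)).clm_apply hY

theorem bracket_mem_span {S T : Set ((ι → ℝ) → (ι → ℝ))}
    (hS : ∀ f ∈ S, ContDiff ℝ (⊤ : ℕ∞) f)
    (hST : ∀ f ∈ S, SmoothSpan T f)
    (hbr : ∀ f ∈ S, ∀ g ∈ S, SmoothSpan T (bracket f g))
    {X Y : (ι → ℝ) → (ι → ℝ)} (hX : SmoothSpan S X) (hY : SmoothSpan S Y) :
    SmoothSpan T (bracket X Y) := by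
  induction hX generalizing Y with
  | @of f hf =>
    induction hY with
    | of hg => exact hbr _ hf _ ‹_›
    | zero => exact SmoothSpan.zero.congr (bracket_zero_right f).symm
    | @add g₁ g₂ hg₁ hg₂ ih1 ih2 =>
      have e := bracket_add_right (X := f)
        ((smooth_of_smoothSpan hg₁ hS).differentiable (by simp))
        ((smooth_of_smoothSpan hg₂ hS).differentiable (by simp))
      exact (ih1.add ih2).congr e.symm
    | @smul h hh g hg ih =>
      have hgd := (smooth_of_smoothSpan hg hS).differentiable (by simp)
      have e : bracket f (fun x i => h x * g x i) =
          fun x => h x • bracket f g x + (fderiv ℝ h x (f x)) • g x :=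
        bracket_smul_right (hh.differentiable (by simp)) hgd
      refine SmoothSpan.congr ?_ e.symm
      exact (ih.smul' h hh).add ((hg.trans hST).smul'
        (fun x => fderiv ℝ h x (f x)) (fderiv_apply_smooth hh (hS f hf)))
  | zero => exact SmoothSpan.zero.congr (bracket_zero_left Y).symm
  | @add f g hf hg ih1 ih2 =>
    have e := bracket_add_left (Y := Y)
      ((smooth_of_smoothSpan hf hS).differentiable (by simp))
      ((smooth_of_smoothSpan hg hS).differentiable (by simp))
    exact ((ih1 hY).add (ih2 hY)).congr e.symm
  | @smul h hh f hf ih =>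
    have hfd := (smooth_of_smoothSpan hf hS).differentiable (by simp)
    have e : bracket (fun x i => h x * f x i) Y =
        fun x => h x • bracket f Y x - (fderiv ℝ h x (Y x)) • f x :=
      bracket_smul_left (hh.differentiable (by simp)) hfd
    refine SmoothSpan.congr ?_ e.symm
    exact ((ih hY).smul' h hh).sub ((hf.trans hST).smul'
      (fun x => fderiv ℝ h x (Y x))
      (fderiv_apply_smooth hh (smooth_of_smoothSpan hY hS)))

theorem ptSpan_smoothSpan (S : Set ((ι → ℝ) → (ι → ℝ))) (x : ι → ℝ) :
    ptSpan (smoothSpan S) x = Submodule.span ℝ {v | ∃ f ∈ S, f x = v} := by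
  apply le_antisymm
  · apply Submodule.span_le.2
    rintro v ⟨f, hf, rfl⟩
    induction hf with
    | of hf => exact Submodule.subset_span ⟨_, hf, rfl⟩
    | zero =>
      show (0 : ι → ℝ) ∈ _
      exact Submodule.zero_mem _
    | add _ _ ih1 ih2 => exact Submodule.add_mem _ ih1 ih2
    | @smul h _ f _ ih =>
      show h x • f x ∈ _
      exact Submodule.smul_mem _ _ ih
  · apply Submodule.span_mono
    rintro v ⟨f, hf, rfl⟩
    exact ⟨f, SmoothSpan.of hf, rfl⟩

end Aux

section Chained

/-- the linear part of g0trunc -/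
noncomputable def shiftL (k i : ℕ) : (Fin (k+1) → ℝ) →ₗ[ℝ] (Fin (k+1) → ℝ) :=
  LinearMap.pi (fun j => if h : j.val ≠ 0 ∧ j.val < k - i then
    LinearMap.proj (⟨j.val + 1, by omega⟩ : Fin (k+1)) else 0)

noncomputable def shiftC (k i : ℕ) : (Fin (k+1) → ℝ) →L[ℝ] (Fin (k+1) → ℝ) :=
  LinearMap.toContinuousLinearMap (shiftL k i)

theorem shiftC_apply (k i : ℕ) (v : Fin (k+1) → ℝ) (j : Fin (k+1)) :
    shiftC k i v j = if h : j.val ≠ 0 ∧ j.val < k - i then v ⟨j.val + 1, by omega⟩ else 0 := by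
  show shiftL k i v j = _
  rw [shiftL, LinearMap.pi_apply]
  split
  · rw [LinearMap.proj_apply]
  · rfl

theorem g0trunc_eq (k i : ℕ) :
    g0trunc k i = fun x => shiftC k i x + (fun j => if j.val = 0 then (1:ℝ) else 0) := by
  funext x j
  simp only [g0trunc, Pi.add_apply, shiftC_apply]
  by_cases h0 : j.val = 0
  · simp [h0]
  · by_cases h1 : j.val < k - i <;> simp [h0, h1]

theorem fderiv_g0trunc (k i : ℕ) (x : Fin (k+1) → ℝ) :
    fderiv ℝ (g0trunc k i) x = shiftC k i := by
  rw [g0trunc_eq]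
  exact (((shiftC k i).hasFDerivAt).add_const _).fderiv

theorem fderiv_eN (k j : ℕ) (x : Fin (k+1) → ℝ) : fderiv ℝ (eN k j) x = 0 := by
  have : eN k j = fun _ => (fun i : Fin (k+1) => if i.val = j then (1:ℝ) else 0) := rfl
  rw [this, fderiv_fun_const]
  rfl

theorem smooth_eN (k j : ℕ) : ContDiff ℝ (⊤ : ℕ∞) (eN k j) := contDiff_const

theorem smooth_g0trunc (k i : ℕ) : ContDiff ℝ (⊤ : ℕ∞) (g0trunc k i) := by
  rw [g0trunc_eq]
  exact ((shiftC k i).contDiff).add contDiff_const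

theorem bracket_g0trunc_eN (k i j : ℕ) :
    bracket (g0trunc k i) (eN k j) =
      fun _ l => -(if l.val ≠ 0 ∧ l.val < k - i ∧ l.val + 1 = j then (1:ℝ) else 0) := by
  funext x l
  simp only [bracket, fderiv_eN, fderiv_g0trunc, ContinuousLinearMap.zero_apply,
    Pi.sub_apply, Pi.zero_apply, shiftC_apply, zero_sub]
  congr 1
  by_cases h0 : l.val ≠ 0 ∧ l.val < k - i
  · rw [dif_pos h0]
    by_cases h2 : l.val + 1 = j
    · simp [eN, h2, h0.1, h0.2]
    · simp [eN, h2, h0]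
  · rw [dif_neg h0]
    simp only [ne_eq, not_and, not_lt] at h0
    by_cases hl : l.val = 0
    · simp [hl]
    · have hle := h0 hl
      simp only [ne_eq, hl, not_false_eq_true, true_and]
      rw [if_neg (by omega)]

theorem bracket_eN_eN (k j j' : ℕ) : bracket (eN k j) (eN k j') = fun _ _ => 0 := by
  funext x l
  simp [bracket, fderiv_eN]

theorem bracket_g0trunc_eN_high (k i j : ℕ) (h : k - i < j) :
    bracket (g0trunc k i) (eN k j) = fun _ _ => 0 := by
  rw [bracket_g0trunc_eN]
  funext x l
  rw [if_neg (by omega), neg_zero]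

theorem bracket_g0trunc_eN_eq (k i : ℕ) (h2 : 2 ≤ k - i) :
    bracket (g0trunc k i) (eN k (k - i)) = fun x l => (-1) * eN k (k - i - 1) x l := by
  rw [bracket_g0trunc_eN]
  funext x l
  rw [neg_one_mul]
  congr 1
  simp only [eN]
  by_cases hl : l.val = k - i - 1
  · rw [if_pos (by omega), if_pos hl]
  · rw [if_neg (by omega), if_neg hl]

theorem g0trunc_succ (k i : ℕ) (hk : 2 ≤ k) (h1 : i + 1 ≤ k - 1) :
    g0trunc k i = fun x l => g0trunc k (i+1) x l +
      x ⟨k - i, by omega⟩ * eN k (k - i - 1) x l := by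
  have hki : 2 ≤ k - i := by omega
  funext x l
  simp only [g0trunc, eN]
  by_cases h0 : l.val = 0
  · rw [if_pos h0, if_pos h0, if_neg (by omega), mul_zero, add_zero]
  · rw [if_neg h0, if_neg h0]
    by_cases h2 : l.val < k - i - 1
    · rw [dif_pos (by omega), dif_pos (show l.val < k - (i+1) by omega),
        if_neg (by omega), mul_zero, add_zero]
    · by_cases h3 : l.val = k - i - 1
      · rw [dif_pos (by omega), dif_neg (show ¬ l.val < k - (i+1) by omega),
          zero_add, if_pos h3, mul_one]
        have : (⟨l.val + 1, by omega⟩ : Fin (k+1)) = ⟨k - i, by omega⟩ :=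
          Fin.ext (by show l.val + 1 = k - i; omega)
        rw [this]
      · rw [dif_neg (by omega), dif_neg (show ¬ l.val < k - (i+1) by omega),
          if_neg h3, mul_zero, add_zero]

theorem coord_smooth (k : ℕ) (m : Fin (k+1)) :
    ContDiff ℝ (⊤ : ℕ∞) (fun x : Fin (k+1) → ℝ => x m) :=
  (ContinuousLinearMap.proj m : (Fin (k+1) → ℝ) →L[ℝ] ℝ).contDiff

theorem rank_aux (k : ℕ) (hk : 2 ≤ k) (i : ℕ) (hi : i ≤ k - 1) (x : Fin (k+1) → ℝ) :
    Module.finrank ℝ (Submodule.span ℝ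
      {v | ∃ f ∈ ({g0trunc k i} ∪ {f | ∃ j : ℕ, k - i ≤ j ∧ j ≤ k ∧ f = eN k j} :
        Set ((Fin (k+1) → ℝ) → (Fin (k+1) → ℝ))), f x = v}) = i + 2 := by
  have hki : 1 ≤ k - i := by omega
  set b : Fin (i+2) → (Fin (k+1) → ℝ) :=
    fun m => if m.val = 0 then g0trunc k i x else eN k (k-i-1+m.val) x with hb
  have hset : {v | ∃ f ∈ ({g0trunc k i} ∪ {f | ∃ j : ℕ, k - i ≤ j ∧ j ≤ k ∧ f = eN k j} :
      Set ((Fin (k+1) → ℝ) → (Fin (k+1) → ℝ))), f x = v} = Set.range b := by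
    ext v
    constructor
    · rintro ⟨f, hf | ⟨j, hj1, hj2, rfl⟩, rfl⟩
      · exact ⟨⟨0, by omega⟩, by simp [hb, Set.mem_singleton_iff.1 hf]⟩
      · refine ⟨⟨j - (k-i-1) , by omega⟩, ?_⟩
        have h1 : ¬ ((⟨j - (k-i-1), by omega⟩ : Fin (i+2)).val = 0) := by
          simp only [Fin.val_mk]; omega
        simp only [hb, h1, if_neg, Fin.val_mk]
        have harg : k - i - 1 + (j - (k - i - 1)) = j := by omega
        show eN k (k - i - 1 + (j - (k - i - 1))) x = eN k j x
        rw [harg]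
    · rintro ⟨m, rfl⟩
      by_cases hm : m.val = 0
      · exact ⟨g0trunc k i, Or.inl rfl, (if_pos hm).symm⟩
      · refine ⟨eN k (k-i-1+m.val),
          Or.inr ⟨k-i-1+m.val, by omega, by have := m.isLt; omega, rfl⟩, ?_⟩
        exact (if_neg hm).symm
  rw [hset]
  have hli : LinearIndependent ℝ b := by
    set coords : Fin (i+2) → Fin (k+1) :=
      fun m => if h : m.val = 0 then ⟨0, by omega⟩
        else ⟨k-i-1+m.val, by have := m.isLt; omega⟩ with hc
    apply LinearIndependent.of_comp (LinearMap.funLeft ℝ ℝ coords)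
    have key : ⇑(LinearMap.funLeft ℝ ℝ coords) ∘ b = ⇑(Pi.basisFun ℝ (Fin (i+2))) := by
      funext l m
      simp only [Function.comp_apply, LinearMap.funLeft_apply, Pi.basisFun_apply,
        Pi.single_apply, hb, hc]
      by_cases hl : l.val = 0 <;> by_cases hm : m.val = 0
      · have hml : m = l := Fin.ext (by omega)
        simp [hml, hl, hm, g0trunc]
      · have hml : ¬ m = l := fun h => hm (by rw [h]; exact hl)
        rw [if_pos hl, dif_neg hm, if_neg hml]
        simp only [g0trunc, Fin.val_mk]
        rw [if_neg (by omega), dif_neg (by omega)]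
      · have hml : ¬ m = l := fun h => hl (by rw [← h]; exact hm)
        rw [if_neg hl, dif_pos hm, if_neg hml]
        simp only [eN, Fin.val_mk]
        rw [if_neg (by omega)]
      · rw [if_neg hl, dif_neg hm]
        simp only [eN, Fin.val_mk]
        by_cases hml : m = l
        · rw [if_pos hml, if_pos (by rw [hml])]
        · rw [if_neg hml,
            if_neg (by have : m.val ≠ l.val := fun h => hml (Fin.ext h); omega)]
    rw [key]
    exact (Pi.basisFun ℝ (Fin (i+2))).linearIndependent
  rw [finrank_span_eq_card hli]
  simp

/-- the generating set at stage i -/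
theorem flag_eq (k : ℕ) (hk : 2 ≤ k) : ∀ i, i ≤ k - 1 →
    derivedFlag {g0 k, g1 k} i =
      smoothSpan ({g0trunc k i} ∪ {f | ∃ j : ℕ, k - i ≤ j ∧ j ≤ k ∧ f = eN k j}) := by
  intro i
  induction i with
  | zero =>
    intro _
    show smoothSpan {g0 k, g1 k} = _
    have hg0 : g0 k = g0trunc k 0 := by
      funext x l
      simp [g0, g0trunc]
    have hg1 : g1 k = eN k k := rfl
    have hsets : ({g0 k, g1 k} : Set ((Fin (k+1) → ℝ) → (Fin (k+1) → ℝ))) =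
        {g0trunc k 0} ∪ {f | ∃ j : ℕ, k - 0 ≤ j ∧ j ≤ k ∧ f = eN k j} := by
      ext f
      simp only [Set.mem_insert_iff, Set.mem_singleton_iff, Set.mem_union,
        Set.mem_setOf_eq, hg0, hg1]
      constructor
      · rintro (rfl | rfl)
        · exact Or.inl rfl
        · exact Or.inr ⟨k, by omega, le_refl k, rfl⟩
      · rintro (rfl | ⟨j, hj1, hj2, rfl⟩)
        · exact Or.inl rfl
        · right
          have : j = k := by omega
          subst this
          rfl
    rw [hsets]
  | succ i ih =>
    intro hi1
    have hik : i ≤ k - 1 := by omega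
    have hIH := ih hik
    have hki2 : 2 ≤ k - i := by omega
    have hsub : k - (i+1) = k - i - 1 := by omega
    -- generators of stage i are smooth
    have hSsm : ∀ f ∈ ({g0trunc k i} ∪ {f | ∃ j : ℕ, k - i ≤ j ∧ j ≤ k ∧ f = eN k j} :
        Set ((Fin (k+1) → ℝ) → (Fin (k+1) → ℝ))), ContDiff ℝ (⊤ : ℕ∞) f := by
      rintro f (rfl | ⟨j, _, _, rfl⟩)
      · exact smooth_g0trunc k i
      · exact smooth_eN k j
    -- stage-i generators lie in the (i+1)-st module
    have hST : ∀ f ∈ ({g0trunc k i} ∪ {f | ∃ j : ℕ, k - i ≤ j ∧ j ≤ k ∧ f = eN k j} :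
        Set ((Fin (k+1) → ℝ) → (Fin (k+1) → ℝ))),
        SmoothSpan ({g0trunc k (i+1)} ∪ {f | ∃ j : ℕ, k - (i+1) ≤ j ∧ j ≤ k ∧ f = eN k j}) f := by
      rintro f (rfl | ⟨j, hj1, hj2, rfl⟩)
      · have base : SmoothSpan ({g0trunc k (i+1)} ∪
            {f | ∃ j : ℕ, k - (i+1) ≤ j ∧ j ≤ k ∧ f = eN k j})
            (fun x l => g0trunc k (i+1) x l +
              x ⟨k - i, by omega⟩ * eN k (k - i - 1) x l) := by
          refine SmoothSpan.add (.of (Or.inl rfl)) ?_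
          refine SmoothSpan.smul _ (coord_smooth k _) (.of (Or.inr ⟨k - i - 1, by omega, by omega, rfl⟩))
        exact base.congr (g0trunc_succ k i hk hi1).symm
      · exact .of (Or.inr ⟨j, by omega, hj2, rfl⟩)
    -- brackets of stage-i generators lie in the (i+1)-st module
    have hbr : ∀ f ∈ ({g0trunc k i} ∪ {f | ∃ j : ℕ, k - i ≤ j ∧ j ≤ k ∧ f = eN k j} :
        Set ((Fin (k+1) → ℝ) → (Fin (k+1) → ℝ))),
        ∀ g ∈ ({g0trunc k i} ∪ {f | ∃ j : ℕ, k - i ≤ j ∧ j ≤ k ∧ f = eN k j} :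
        Set ((Fin (k+1) → ℝ) → (Fin (k+1) → ℝ))),
        SmoothSpan ({g0trunc k (i+1)} ∪ {f | ∃ j : ℕ, k - (i+1) ≤ j ∧ j ≤ k ∧ f = eN k j})
          (bracket f g) := by
      have hge : ∀ j : ℕ, k - i ≤ j → j ≤ k →
          SmoothSpan ({g0trunc k (i+1)} ∪ {f | ∃ j : ℕ, k - (i+1) ≤ j ∧ j ≤ k ∧ f = eN k j})
            (bracket (g0trunc k i) (eN k j)) := by
        intro j hj1 hj2
        rcases eq_or_lt_of_le hj1 with heq | hlt
        · rw [← heq, bracket_g0trunc_eN_eq k i hki2]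
          exact SmoothSpan.smul _ contDiff_const (.of (Or.inr ⟨k - i - 1, by omega, by omega, rfl⟩))
        · rw [bracket_g0trunc_eN_high k i j hlt]
          exact .zero
      rintro f (rfl | ⟨j, hj1, hj2, rfl⟩) g (rfl | ⟨j', hj1', hj2', rfl⟩)
      · exact (SmoothSpan.zero).congr (bracket_self _).symm
      · exact hge j' hj1' hj2'
      · rw [bracket_antisymm]
        exact (hge j hj1 hj2).neg
      · rw [bracket_eN_eN]
        exact .zero
    show smoothSpan _ = _
    apply Set.Subset.antisymm
    · apply smoothSpan_subset
      rintro f (hf | ⟨X, hX, Y, hY, rfl⟩)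
      · rw [hIH] at hf
        exact SmoothSpan.trans hf hST
      · rw [hIH] at hX hY
        exact bracket_mem_span hSsm hST hbr hX hY
    · apply smoothSpan_subset
      -- each generator of stage i+1 lies in smoothSpan (G_i ∪ brackets)
      have hEkim1 : SmoothSpan (derivedFlag {g0 k, g1 k} i ∪
          {h | ∃ X ∈ derivedFlag {g0 k, g1 k} i, ∃ Y ∈ derivedFlag {g0 k, g1 k} i,
            h = bracket X Y}) (eN k (k - i - 1)) := by
        have hg0i : g0trunc k i ∈ derivedFlag {g0 k, g1 k} i := by
          rw [hIH]; exact .of (Or.inl rfl)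
        have heki : eN k (k - i) ∈ derivedFlag {g0 k, g1 k} i := by
          rw [hIH]; exact .of (Or.inr ⟨k - i, le_refl _, by omega, rfl⟩)
        have hbrmem : bracket (g0trunc k i) (eN k (k - i)) ∈
            ({h | ∃ X ∈ derivedFlag {g0 k, g1 k} i, ∃ Y ∈ derivedFlag {g0 k, g1 k} i,
              h = bracket X Y} : Set _) := ⟨_, hg0i, _, heki, rfl⟩
        have h1 : SmoothSpan (derivedFlag {g0 k, g1 k} i ∪ _)
            (bracket (g0trunc k i) (eN k (k - i))) := .of (Or.inr hbrmem)
        have h2 := h1.smul (fun _ => (-1:ℝ)) contDiff_const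
        refine h2.congr ?_
        rw [bracket_g0trunc_eN_eq k i hki2]
        funext x l
        simp [eN]
      rintro f (rfl | ⟨j, hj1, hj2, rfl⟩)
      · -- g0trunc k (i+1) = g0trunc k i - x_{k-i} * eN k (k-i-1)
        have hg0i : SmoothSpan (derivedFlag {g0 k, g1 k} i ∪
            {h | ∃ X ∈ derivedFlag {g0 k, g1 k} i, ∃ Y ∈ derivedFlag {g0 k, g1 k} i,
              h = bracket X Y}) (g0trunc k i) := by
          refine .of (Or.inl ?_)
          rw [hIH]; exact .of (Or.inl rfl)
        have hsm := hEkim1.smul (fun x => x ⟨k - i, by omega⟩) (coord_smooth k _)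
        have := hg0i.sub hsm
        refine this.congr ?_
        have hsucc := g0trunc_succ k i hk hi1
        funext x l
        rw [Pi.sub_apply, congrFun (congrFun hsucc x) l]
        ring
      · rcases Nat.lt_or_ge j (k - i) with hlow | hhigh
        · have : j = k - i - 1 := by omega
          subst this
          exact hEkim1
        · refine .of (Or.inl ?_)
          rw [hIH]; exact .of (Or.inr ⟨j, hhigh, hj2, rfl⟩)

/-- For the chained form on `ℝ^{k+1}`, the derived flag satisfies
`G^i = span{∂/∂z_{k-i}, …, ∂/∂z_k, ∂/∂z₀ + z₂∂/∂z₁ + ⋯ + z_{k-i}∂/∂z_{k-i-1}}`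
for `0 ≤ i ≤ k−1`; in particular `rank G^i = i+2` and `G^{k-1} = Tℝ^{k+1}`. -/
theorem chained_derived_flag (k : ℕ) (hk : 2 ≤ k) (i : ℕ) (hi : i ≤ k - 1) :
    derivedFlag {g0 k, g1 k} i =
      smoothSpan ({g0trunc k i} ∪ {f | ∃ j : ℕ, k - i ≤ j ∧ j ≤ k ∧ f = eN k j}) ∧
    (∀ x : Fin (k+1) → ℝ,
      Module.finrank ℝ (ptSpan (derivedFlag {g0 k, g1 k} i) x) = i + 2) ∧
    (i = k - 1 → ∀ x : Fin (k+1) → ℝ, ptSpan (derivedFlag {g0 k, g1 k} i) x = ⊤) := by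
  have hflag := flag_eq k hk i hi
  have hrank : ∀ x : Fin (k+1) → ℝ,
      Module.finrank ℝ (ptSpan (derivedFlag {g0 k, g1 k} i) x) = i + 2 := by
    intro x
    rw [hflag, ptSpan_smoothSpan]
    exact rank_aux k hk i hi x
  refine ⟨hflag, hrank, ?_⟩
  rintro rfl x
  apply Submodule.eq_top_of_finrank_eq
  rw [hrank x, Module.finrank_fin_fun]
  omega

end Chained
end

section
/- For the chained form on ℝ^{k+1}, the characteristic distribution of G^i equals C^i = span{∂/∂z_{k-i+1}, …, ∂/∂z_k} for 1 ≤ i ≤ k−2; in particular C^i is involutive, has rank i, and satisfies C^i ⊆ G^{i-1} with corank one in G^{i-1}. -/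
namespace Chained

noncomputable def shiftL (k : ℕ) : (Fin (k+1) → ℝ) →L[ℝ] (Fin (k+1) → ℝ) :=
  ContinuousLinearMap.pi fun i =>
    if h : i.val ≠ 0 ∧ i.val < k then ContinuousLinearMap.proj ⟨i.val + 1, by omega⟩ else 0

lemma shiftL_apply_pos {k : ℕ} (v : Fin (k+1) → ℝ) (i : Fin (k+1))
    (h : i.val ≠ 0 ∧ i.val < k) : shiftL k v i = v ⟨i.val + 1, by omega⟩ := by
  have h' : ¬i = 0 ∧ i.val < k := ⟨fun e => h.1 (by simp [e]), h.2⟩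
  simp [shiftL, ContinuousLinearMap.pi_apply, dif_pos h']

lemma shiftL_apply_neg {k : ℕ} (v : Fin (k+1) → ℝ) (i : Fin (k+1))
    (h : ¬(i.val ≠ 0 ∧ i.val < k)) : shiftL k v i = 0 := by
  have h' : ¬(¬i = 0 ∧ i.val < k) := fun hh => h ⟨fun e => hh.1 (by ext; simpa using e), hh.2⟩
  simp [shiftL, ContinuousLinearMap.pi_apply, dif_neg h']

lemma g0_eq (k : ℕ) :
    g0 k = fun x => (fun i => if i.val = 0 then (1:ℝ) else 0) + shiftL k x := by
  funext x i
  simp only [Pi.add_apply]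
  by_cases h0 : i.val = 0
  · rw [shiftL_apply_neg _ _ (by tauto)]
    simp [g0, h0]
  · by_cases hk : i.val < k
    · rw [shiftL_apply_pos _ _ ⟨h0, hk⟩]
      simp [g0, h0, hk]
    · rw [shiftL_apply_neg _ _ (by tauto)]
      simp [g0, h0, hk]

lemma fderiv_g0 (k : ℕ) (x : Fin (k+1) → ℝ) : fderiv ℝ (g0 k) x = shiftL k := by
  rw [g0_eq]
  exact (((shiftL k).hasFDerivAt (x := x)).const_add _).fderiv

lemma contDiff_g0 (k : ℕ) : ContDiff ℝ (⊤ : ℕ∞) (g0 k) := by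
  rw [g0_eq]; exact contDiff_const.add (shiftL k).contDiff

lemma fderiv_eN (k j : ℕ) (x : Fin (k+1) → ℝ) : fderiv ℝ (eN k j) x = 0 :=
  fderiv_const_apply _

lemma contDiff_eN (k j : ℕ) : ContDiff ℝ (⊤ : ℕ∞) (eN k j) := contDiff_const

lemma contDiff_bracket {k : ℕ} {X Y : (Fin (k+1) → ℝ) → (Fin (k+1) → ℝ)}
    (hX : ContDiff ℝ (⊤ : ℕ∞) X) (hY : ContDiff ℝ (⊤ : ℕ∞) Y) : ContDiff ℝ (⊤ : ℕ∞) (bracket X Y) :=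
  ((hY.fderiv_right (by simp)).clm_apply hX).sub ((hX.fderiv_right (by simp)).clm_apply hY)

lemma fderiv_apply_comp {k : ℕ} {f : (Fin (k+1) → ℝ) → (Fin (k+1) → ℝ)}
    {x : Fin (k+1) → ℝ} (hf : DifferentiableAt ℝ f x) (a : Fin (k+1)) (v : Fin (k+1) → ℝ) :
    fderiv ℝ (fun y => f y a) x v = fderiv ℝ f x v a := by
  have : (fun y => f y a) = (ContinuousLinearMap.proj a (R := ℝ) (φ := fun _ : Fin (k+1) => ℝ)) ∘ f := rfl
  rw [this, fderiv_comp x (ContinuousLinearMap.proj a).differentiableAt hf]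
  simp

lemma key_deriv {k : ℕ} {c : (Fin (k+1) → ℝ) → (Fin (k+1) → ℝ)} (hc : ContDiff ℝ (⊤ : ℕ∞) c)
    (a b : Fin (k+1)) (hrel : ∀ x, c x a = c x 0 * x b) (x v : Fin (k+1) → ℝ) :
    fderiv ℝ c x v a = fderiv ℝ c x v 0 * x b + c x 0 * v b := by
  have hd : DifferentiableAt ℝ c x := (hc.differentiable (by simp)) x
  have hd0 : DifferentiableAt ℝ (fun y => c y 0) x :=
    ((contDiff_pi.mp hc 0).differentiable (by simp)) x
  have hdb : DifferentiableAt ℝ (fun y : Fin (k+1) → ℝ => y b) x :=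
    (ContinuousLinearMap.proj b (R := ℝ) (φ := fun _ : Fin (k+1) => ℝ)).differentiableAt
  have h1 : (fun y => c y a) = fun y => c y 0 * y b := funext hrel
  have := fderiv_apply_comp hd a v
  rw [← this, h1, fderiv_fun_mul hd0 hdb]
  have hb : fderiv ℝ (fun y : Fin (k+1) → ℝ => y b) x v = v b := by
    rw [show (fun y : Fin (k+1) → ℝ => y b) = (ContinuousLinearMap.proj b (R := ℝ) (φ := fun _ : Fin (k+1) => ℝ)) from rfl]
    simp
  rw [ContinuousLinearMap.add_apply, ContinuousLinearMap.smul_apply,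
    ContinuousLinearMap.smul_apply, hb, fderiv_apply_comp hd 0 v]
  simp [smul_eq_mul]; ring

lemma smoothSpan_mono {ι : Type} [Fintype ι] [DecidableEq ι]
    {S T : Set ((ι → ℝ) → (ι → ℝ))} (hST : S ⊆ T) : smoothSpan S ⊆ smoothSpan T := by
  intro f hf
  induction hf with
  | of h => exact .of (hST h)
  | zero => exact .zero
  | add _ _ ih1 ih2 => exact .add ih1 ih2
  | smul h hh _ ih => exact .smul h hh ih

lemma smooth_of_smoothSpan {ι : Type} [Fintype ι] [DecidableEq ι]
    {S : Set ((ι → ℝ) → (ι → ℝ))} (hS : ∀ g ∈ S, ContDiff ℝ (⊤ : ℕ∞) g)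
    {f} (hf : SmoothSpan S f) : ContDiff ℝ (⊤ : ℕ∞) f := by
  induction hf with
  | of h => exact hS _ h
  | zero => exact contDiff_const
  | add _ _ ih1 ih2 => exact ih1.add ih2
  | smul h hh _ ih => exact contDiff_pi.mpr fun i => hh.mul (contDiff_pi.mp ih i)

/-- The pointwise linear relations defining `G^i`. -/
def Grel (k i : ℕ) (c : (Fin (k+1) → ℝ) → (Fin (k+1) → ℝ)) : Prop :=
  ∀ x, ∀ m : ℕ, ∀ (_ : 1 ≤ m) (h2 : m + i + 1 ≤ k),
    c x ⟨m, by omega⟩ = c x 0 * x ⟨m+1, by omega⟩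

def Gset (k i : ℕ) : Set ((Fin (k+1) → ℝ) → (Fin (k+1) → ℝ)) :=
  {c | ContDiff ℝ (⊤ : ℕ∞) c ∧ Grel k i c}

lemma g0_mem_Gset (k i : ℕ) : g0 k ∈ Gset k i := by
  refine ⟨contDiff_g0 k, ?_⟩
  intro x m h1 h2
  simp only [g0, Fin.val_zero]
  rw [if_neg (by omega), dif_pos (by omega)]
  simp

lemma eN_mem_Gset {k i j : ℕ} (hj : k ≤ j + i) (hj0 : j ≠ 0) : eN k j ∈ Gset k i := by
  refine ⟨contDiff_eN k j, ?_⟩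
  intro x m h1 h2
  simp only [eN]
  rw [if_neg (by omega), if_neg (by simpa using hj0.symm)]
  simp

lemma Gset_mono (k i : ℕ) : Gset k i ⊆ Gset k (i+1) := by
  rintro c ⟨hc, hrel⟩
  exact ⟨hc, fun x m h1 h2 => hrel x m h1 (by omega)⟩

lemma Gset_bracket {k i : ℕ} {X Y : (Fin (k+1) → ℝ) → (Fin (k+1) → ℝ)}
    (hX : X ∈ Gset k i) (hY : Y ∈ Gset k i) : bracket X Y ∈ Gset k (i+1) := by
  obtain ⟨hXs, hXr⟩ := hX
  obtain ⟨hYs, hYr⟩ := hY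
  refine ⟨contDiff_bracket hXs hYs, ?_⟩
  intro x m h1 h2
  have eY : fderiv ℝ Y x (X x) ⟨m, by omega⟩
      = fderiv ℝ Y x (X x) 0 * x ⟨m+1, by omega⟩ + Y x 0 * (X x) ⟨m+1, by omega⟩ :=
    key_deriv hYs ⟨m, by omega⟩ ⟨m+1, by omega⟩ (fun y => hYr y m h1 (by omega)) x (X x)
  have eX : fderiv ℝ X x (Y x) ⟨m, by omega⟩
      = fderiv ℝ X x (Y x) 0 * x ⟨m+1, by omega⟩ + X x 0 * (Y x) ⟨m+1, by omega⟩ :=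
    key_deriv hXs ⟨m, by omega⟩ ⟨m+1, by omega⟩ (fun y => hXr y m h1 (by omega)) x (Y x)
  have eX2 : (X x) ⟨m+1, by omega⟩ = X x 0 * x ⟨m+2, by omega⟩ :=
    hXr x (m+1) (by omega) (by omega)
  have eY2 : (Y x) ⟨m+1, by omega⟩ = Y x 0 * x ⟨m+2, by omega⟩ :=
    hYr x (m+1) (by omega) (by omega)
  simp only [bracket, Pi.sub_apply]
  rw [eY, eX, eX2, eY2]
  ring

lemma bracket_g0_eN {k j : ℕ} (h1 : 2 ≤ j) (h2 : j ≤ k) :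
    bracket (g0 k) (eN k j) = fun x idx => -(eN k (j-1) x idx) := by
  funext x idx
  simp only [bracket, Pi.sub_apply, fderiv_eN, fderiv_g0, ContinuousLinearMap.zero_apply,
    Pi.zero_apply]
  by_cases h : idx.val ≠ 0 ∧ idx.val < k
  · rw [shiftL_apply_pos _ _ h]
    simp only [eN]
    by_cases hij : idx.val = j - 1
    · rw [if_pos (by omega), if_pos (by omega)]; ring
    · rw [if_neg (by omega), if_neg (by omega)]; ring
  · rw [shiftL_apply_neg _ _ h]
    simp only [eN]
    rw [if_neg (by omega)]
    ring

lemma flag_eq (k : ℕ) : ∀ i, i + 1 ≤ k → derivedFlag {g0 k, g1 k} i = Gset k i := by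
  have hg1 : g1 k = eN k k := rfl
  intro i
  induction i with
  | zero =>
    intro hk
    ext c
    constructor
    · intro h
      induction h with
      | of hf =>
        rcases hf with rfl | rfl
        · exact g0_mem_Gset k 0
        · rw [hg1]; exact eN_mem_Gset (by omega) (by omega)
      | zero => exact ⟨contDiff_const, fun x m h1 h2 => by simp⟩
      | add hf hg ih1 ih2 =>
        exact ⟨ih1.1.add ih2.1, fun x m h1 h2 => by
          simp only [Pi.add_apply, ih1.2 x m h1 h2, ih2.2 x m h1 h2]; ring⟩
      | smul h hh hf ih =>
        exact ⟨contDiff_pi.mpr fun i => hh.mul (contDiff_pi.mp ih.1 i),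
          fun x m h1 h2 => by simp only [ih.2 x m h1 h2]; ring⟩
    · rintro ⟨hc, hrel⟩
      have ha : ContDiff ℝ (⊤ : ℕ∞) (fun x => c x 0) := contDiff_pi.mp hc 0
      have hb : ContDiff ℝ (⊤ : ℕ∞) (fun x => c x ⟨k, by omega⟩) := contDiff_pi.mp hc _
      have hceq : c = fun x => (fun idx => (fun y => c y 0) x * g0 k x idx)
          + (fun idx => (fun y => c y ⟨k, by omega⟩) x * g1 k x idx) := by
        funext x idx
        simp only [Pi.add_apply]
        by_cases h0 : idx.val = 0
        · have : idx = 0 := Fin.ext h0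
          subst this
          simp [g0, g1, Fin.val_zero]
          right
          split_ifs with e
          · omega
          · exact if_neg e
        · by_cases hkk : idx.val = k
          · have : idx = ⟨k, by omega⟩ := Fin.ext hkk
            rw [this]
            simp only [g0, g1]
            rw [if_neg (by omega), dif_neg (by omega)]
            simp
          · have h2 : idx.val + 0 + 1 ≤ k := by have := idx.isLt; omega
            have := hrel x idx.val (by omega) h2
            simp only [Fin.eta] at this
            simp only [g0, g1]
            rw [if_neg h0, dif_pos (by have := idx.isLt; omega), if_neg hkk, this]
            ring
      rw [hceq]
      exact .add (.smul _ ha (.of (Set.mem_insert _ _)))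
        (.smul _ hb (.of (Set.mem_insert_of_mem _ rfl)))
  | succ i ih =>
    intro hk
    have IH := ih (by omega)
    ext c
    constructor
    · intro h
      induction h with
      | of hf =>
        rcases hf with hf | hf
        · exact Gset_mono k i (IH ▸ hf)
        · obtain ⟨X, hX, Y, hY, rfl⟩ := hf
          exact Gset_bracket (IH ▸ hX) (IH ▸ hY)
      | zero => exact ⟨contDiff_const, fun x m h1 h2 => by simp⟩
      | add hf hg ih1 ih2 =>
        exact ⟨ih1.1.add ih2.1, fun x m h1 h2 => by
          simp only [Pi.add_apply, ih1.2 x m h1 h2, ih2.2 x m h1 h2]; ring⟩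
      | smul h hh hf ihh =>
        exact ⟨contDiff_pi.mpr fun i => hh.mul (contDiff_pi.mp ihh.1 i),
          fun x m h1 h2 => by simp only [ihh.2 x m h1 h2]; ring⟩
    · rintro ⟨hc, hrel⟩
      obtain ⟨j, hj⟩ : ∃ j, k = j + i + 2 := ⟨k - i - 2, by omega⟩
      set b : (Fin (k+1) → ℝ) → ℝ :=
        fun x => c x ⟨j+1, by omega⟩ - c x 0 * x ⟨j+2, by omega⟩ with hbdef
      have hbs : ContDiff ℝ (⊤ : ℕ∞) b :=
        (contDiff_pi.mp hc _).sub ((contDiff_pi.mp hc 0).mul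
          ((ContinuousLinearMap.proj (⟨j+2, by omega⟩ : Fin (k+1))
            (R := ℝ) (φ := fun _ : Fin (k+1) => ℝ)).contDiff))
      set c' : (Fin (k+1) → ℝ) → (Fin (k+1) → ℝ) :=
        fun x idx => c x idx - b x * eN k (j+1) x idx with hc'def
      have hc' : c' ∈ Gset k i := by
        constructor
        · exact contDiff_pi.mpr fun idx =>
            (contDiff_pi.mp hc idx).sub (hbs.mul contDiff_const)
        · intro x m h1 h2
          have hc'0 : c' x 0 = c x 0 := by
            have he : eN k (j+1) x 0 = (0:ℝ) := by simp [eN]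
            simp only [hc'def]
            rw [he]
            ring
          rw [hc'0]
          by_cases hm : m = j + 1
          · subst hm
            have he : eN k (j+1) x ⟨j+1, by omega⟩ = (1:ℝ) := by simp [eN]
            simp only [hc'def]
            rw [he, hbdef]
            ring
          · have hrc := hrel x m h1 (by omega)
            have he : eN k (j+1) x ⟨m, by omega⟩ = (0:ℝ) := by
              simp only [eN]
              rw [if_neg (by omega)]
            simp only [hc'def]
            rw [he, hrc]
            ring
      have heN2 : eN k (j+2) ∈ Gset k i := eN_mem_Gset (by omega) (by omega)
      have hbr : bracket (g0 k) (eN k (j+2)) ∈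
          {h | ∃ X ∈ derivedFlag {g0 k, g1 k} i, ∃ Y ∈ derivedFlag {g0 k, g1 k} i,
            h = bracket X Y} :=
        ⟨g0 k, IH ▸ g0_mem_Gset k i, eN k (j+2), IH ▸ heN2, rfl⟩
      have hbv : bracket (g0 k) (eN k (j+2)) = fun x idx => -(eN k (j+1) x idx) := by
        have := bracket_g0_eN (k := k) (j := j+2) (by omega) (by omega)
        simpa using this
      have hceq : c = fun x => (fun idx => c' x idx)
          + (fun idx => (fun y => -(b y)) x * bracket (g0 k) (eN k (j+2)) x idx) := by
        rw [hbv]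
        funext x idx
        simp only [Pi.add_apply, hc'def]
        ring
      rw [hceq]
      exact .add (.of (Or.inl (IH ▸ hc'))) (.smul _ hbs.neg (.of (Or.inr hbr)))

/-- The vanishing conditions defining `C^i`. -/
def Cset (k i : ℕ) : Set ((Fin (k+1) → ℝ) → (Fin (k+1) → ℝ)) :=
  {c | ContDiff ℝ (⊤ : ℕ∞) c ∧ ∀ x, ∀ m : Fin (k+1), m.val + i ≤ k → c x m = 0}

lemma Cset_sub_Gset {k i i' : ℕ} (h : i ≤ i' + 1) : Cset k i ⊆ Gset k i' := by
  rintro c ⟨hc, hv⟩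
  refine ⟨hc, fun x m h1 h2 => ?_⟩
  rw [hv x ⟨m, by omega⟩ (by simpa using by omega), hv x 0 (by simpa using by omega)]
  ring

lemma fderiv_zero_component {k : ℕ} {c : (Fin (k+1) → ℝ) → (Fin (k+1) → ℝ)}
    (hc : ContDiff ℝ (⊤ : ℕ∞) c) (a : Fin (k+1)) (h : ∀ x, c x a = 0) (x v : Fin (k+1) → ℝ) :
    fderiv ℝ c x v a = 0 := by
  have hd : DifferentiableAt ℝ c x := hc.differentiable (by simp) x
  rw [← fderiv_apply_comp hd a v]
  have h2 : (fun y => c y a) = fun _ => (0:ℝ) := funext h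
  rw [h2, fderiv_const_apply]
  rfl

lemma eN_mem_Cset {k i j : ℕ} (hj : k + 1 ≤ j + i) : eN k j ∈ Cset k i := by
  refine ⟨contDiff_eN k j, fun x m hm => ?_⟩
  simp only [eN]
  rw [if_neg (by omega)]

lemma Cset_bracket_right {k i : ℕ} {c f : (Fin (k+1) → ℝ) → (Fin (k+1) → ℝ)}
    (hc : c ∈ Cset k i) (hf : f ∈ Gset k i) : bracket c f ∈ Gset k i := by
  obtain ⟨hcs, hcv⟩ := hc
  obtain ⟨hfs, hfr⟩ := hf
  refine ⟨contDiff_bracket hcs hfs, ?_⟩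
  intro x m h1 h2
  have d1 : fderiv ℝ c x (f x) ⟨m, by omega⟩ = 0 :=
    fderiv_zero_component hcs ⟨m, by omega⟩ (fun y => hcv y ⟨m, by omega⟩ (by simpa using by omega)) x (f x)
  have d0 : fderiv ℝ c x (f x) 0 = 0 :=
    fderiv_zero_component hcs 0 (fun y => hcv y 0 (by simpa using by omega)) x (f x)
  have e1 : fderiv ℝ f x (c x) ⟨m, by omega⟩
      = fderiv ℝ f x (c x) 0 * x ⟨m+1, by omega⟩ + f x 0 * (c x) ⟨m+1, by omega⟩ :=
    key_deriv hfs ⟨m, by omega⟩ ⟨m+1, by omega⟩ (fun y => hfr y m h1 h2) x (c x)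
  have e2 : (c x) ⟨m+1, by omega⟩ = 0 := hcv x ⟨m+1, by omega⟩ (by simpa using by omega)
  simp only [bracket, Pi.sub_apply]
  rw [e1, d1, d0, e2]
  ring

lemma char_sub_Cset {k i : ℕ} (hi : 1 ≤ i) (hk : i + 2 ≤ k)
    {c : (Fin (k+1) → ℝ) → (Fin (k+1) → ℝ)}
    (hc : c ∈ Gset k i) (hbr : ∀ f ∈ Gset k i, bracket c f ∈ Gset k i) : c ∈ Cset k i := by
  obtain ⟨hcs, hcr⟩ := hc
  obtain ⟨t, ht⟩ : ∃ t, k = t + i + 2 := ⟨k - i - 2, by omega⟩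
  have hd : ∀ x, DifferentiableAt ℝ c x := fun x => hcs.differentiable (by simp) x
  -- step 1 : the coefficient of g0 vanishes
  have h0 : ∀ x, c x 0 = 0 := by
    intro x
    have hmem := hbr (eN k (t+2)) (eN_mem_Gset (by omega) (by omega))
    have hrel := hmem.2 x (t+1) (by omega) (by omega)
    have hb0 : ∀ a : Fin (k+1), bracket c (eN k (t+2)) x a
        = -(fderiv ℝ c x (eN k (t+2) x) a) := by
      intro a
      simp only [bracket, Pi.sub_apply, fderiv_eN]
      simp
    have e1 : fderiv ℝ c x (eN k (t+2) x) ⟨t+1, by omega⟩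
        = fderiv ℝ c x (eN k (t+2) x) 0 * x ⟨t+2, by omega⟩
          + c x 0 * (eN k (t+2) x) ⟨t+2, by omega⟩ :=
      key_deriv hcs ⟨t+1, by omega⟩ ⟨t+2, by omega⟩
        (fun y => hcr y (t+1) (by omega) (by omega)) x _
    have e2 : (eN k (t+2) x) ⟨t+2, by omega⟩ = 1 := by simp [eN]
    rw [hb0, hb0, e1, e2] at hrel
    linarith
  have hv1 : ∀ x, ∀ m : ℕ, ∀ (hm : m + i + 1 ≤ k), c x ⟨m, by omega⟩ = 0 := by
    intro x m hm
    by_cases h1 : 1 ≤ m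
    · rw [hcr x m h1 hm, h0 x]; ring
    · have hm0 : m = 0 := by omega
      subst hm0
      rw [show (⟨0, by omega⟩ : Fin (k+1)) = 0 from by ext; simp]
      exact h0 x
  -- step 3 : the coefficient of the lowest eN vanishes
  have h2 : ∀ x, c x ⟨t+2, by omega⟩ = 0 := by
    intro x
    have hmem := hbr (g0 k) (g0_mem_Gset k i)
    have hrel := hmem.2 x (t+1) (by omega) (by omega)
    have hb : ∀ a : Fin (k+1), bracket c (g0 k) x a
        = shiftL k (c x) a - fderiv ℝ c x (g0 k x) a := by
      intro a
      simp only [bracket, Pi.sub_apply, fderiv_g0]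
    have d1 : fderiv ℝ c x (g0 k x) ⟨t+1, by omega⟩ = 0 :=
      fderiv_zero_component hcs ⟨t+1, by omega⟩ (fun y => hv1 y (t+1) (by omega)) x _
    have d0 : fderiv ℝ c x (g0 k x) 0 = 0 :=
      fderiv_zero_component hcs 0 h0 x _
    have s1 : shiftL k (c x) ⟨t+1, by omega⟩ = c x ⟨t+2, by omega⟩ := by
      rw [shiftL_apply_pos _ _ (by constructor <;> simp <;> omega)]
    have s0 : shiftL k (c x) 0 = 0 :=
      shiftL_apply_neg _ _ (by simp)
    rw [hb, hb, d1, d0, s1, s0] at hrel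
    simpa using hrel
  refine ⟨hcs, fun x m hm => ?_⟩
  by_cases hmt : m.val = t + 2
  · have : m = ⟨t+2, by omega⟩ := Fin.ext hmt
    rw [this]; exact h2 x
  · have := hv1 x m.val (by omega)
    simpa using this


lemma rep (k : ℕ) : ∀ (t : ℕ), t ≤ k + 1 → ∀ (c : (Fin (k+1) → ℝ) → (Fin (k+1) → ℝ)),
    ContDiff ℝ (⊤ : ℕ∞) c → (∀ x, ∀ m : Fin (k+1), m.val + t < k + 1 → c x m = 0) →
    c ∈ smoothSpan {f | ∃ j : ℕ, (k+1) - t ≤ j ∧ j ≤ k ∧ f = eN k j} := by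
  intro t
  induction t with
  | zero =>
    intro _ c _ hv
    have : c = fun _ _ => (0:ℝ) := by
      funext x m; exact hv x m (by omega)
    rw [this]
    exact .zero
  | succ t ih =>
    intro ht c hc hv
    set b : (Fin (k+1) → ℝ) → ℝ := fun x => c x ⟨k - t, by omega⟩ with hbdef
    have hbs : ContDiff ℝ (⊤ : ℕ∞) b := contDiff_pi.mp hc _
    set c' : (Fin (k+1) → ℝ) → (Fin (k+1) → ℝ) :=
      fun x idx => c x idx - b x * eN k (k - t) x idx with hc'def
    have hc's : ContDiff ℝ (⊤ : ℕ∞) c' := contDiff_pi.mpr fun idx =>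
      (contDiff_pi.mp hc idx).sub (hbs.mul contDiff_const)
    have hc'v : ∀ x, ∀ m : Fin (k+1), m.val + t < k + 1 → c' x m = 0 := by
      intro x m hm
      by_cases hmd : m.val = k - t
      · have hme : m = ⟨k - t, by omega⟩ := Fin.ext hmd
        have he : eN k (k - t) x m = 1 := by simp [eN, hmd]
        simp only [hc'def]
        rw [he, hbdef, hme]
        ring
      · have he : eN k (k - t) x m = 0 := by
          simp only [eN]; rw [if_neg hmd]
        simp only [hc'def]
        rw [he, hv x m (by omega)]
        ring
    have hIH := ih (by omega) c' hc's hc'v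
    have hIH' : c' ∈ smoothSpan {f | ∃ j : ℕ, (k+1) - (t+1) ≤ j ∧ j ≤ k ∧ f = eN k j} := by
      refine smoothSpan_mono ?_ hIH
      rintro f ⟨j, hj1, hj2, rfl⟩
      exact ⟨j, by omega, hj2, rfl⟩
    have hceq : c = fun x => (fun idx => c' x idx)
        + (fun idx => b x * eN k (k - t) x idx) := by
      funext x idx
      simp only [Pi.add_apply, hc'def]
      ring
    rw [hceq]
    exact .add hIH' (.smul _ hbs (.of ⟨k - t, by omega, by omega, rfl⟩))

lemma Cset_eq_span (k i : ℕ) (hi : 1 ≤ i) (hik : i ≤ k) :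
    Cset k i = smoothSpan {f | ∃ j : ℕ, k - i + 1 ≤ j ∧ j ≤ k ∧ f = eN k j} := by
  ext c
  constructor
  · rintro ⟨hc, hv⟩
    have h1 := rep k i (by omega) c hc (fun x m hm => hv x m (by omega))
    have hset : {f | ∃ j : ℕ, (k+1) - i ≤ j ∧ j ≤ k ∧ f = eN k j}
        = {f | ∃ j : ℕ, k - i + 1 ≤ j ∧ j ≤ k ∧ f = eN k j} := by
      have he : (k+1) - i = k - i + 1 := by omega
      rw [he]
    rwa [hset] at h1
  · intro h
    induction h with
    | of hf =>
      obtain ⟨j, hj1, hj2, rfl⟩ := hf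
      exact eN_mem_Cset (by omega)
    | zero => exact ⟨contDiff_const, by simp⟩
    | add hf hg ih1 ih2 =>
      exact ⟨ih1.1.add ih2.1, fun x m hm => by
        simp only [Pi.add_apply, ih1.2 x m hm, ih2.2 x m hm]; ring⟩
    | smul h hh hf ihh =>
      exact ⟨contDiff_pi.mpr fun idx => hh.mul (contDiff_pi.mp ihh.1 idx),
        fun x m hm => by simp only [ihh.2 x m hm]; ring⟩

lemma Cset_bracket {k i : ℕ} {X Y : (Fin (k+1) → ℝ) → (Fin (k+1) → ℝ)}
    (hX : X ∈ Cset k i) (hY : Y ∈ Cset k i) : bracket X Y ∈ Cset k i := by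
  refine ⟨contDiff_bracket hX.1 hY.1, fun x m hm => ?_⟩
  have d1 : fderiv ℝ Y x (X x) m = 0 :=
    fderiv_zero_component hY.1 m (fun y => hY.2 y m hm) x _
  have d2 : fderiv ℝ X x (Y x) m = 0 :=
    fderiv_zero_component hX.1 m (fun y => hX.2 y m hm) x _
  simp only [bracket, Pi.sub_apply, d1, d2]
  ring

/-- The family of coordinate fields spanning `C^i`, as constant vectors. -/
noncomputable def sfam (k i : ℕ) : Fin i → (Fin (k+1) → ℝ) :=
  fun t => eN k (k - i + 1 + t.val) 0

lemma sfam_li (k i : ℕ) (hik : i ≤ k) : LinearIndependent ℝ (sfam k i) := by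
  have hg : ∀ t : Fin i, sfam k i t
      = Pi.basisFun ℝ (Fin (k+1)) ⟨k - i + 1 + t.val, by omega⟩ := by
    intro t
    rw [Pi.basisFun_apply]
    funext a
    by_cases h : a.val = k - i + 1 + t.val
    · have : a = (⟨k - i + 1 + t.val, by omega⟩ : Fin (k+1)) := Fin.ext h
      rw [this]
      simp [sfam, eN]
    · rw [Pi.single_apply, if_neg (by intro hh; rw [hh] at h; simp at h)]
      simp [sfam, eN]
      omega
  have hinj : Function.Injective
      (fun t : Fin i => (⟨k - i + 1 + t.val, by omega⟩ : Fin (k+1))) := by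
    intro a b hab
    have := congrArg Fin.val hab
    simp at this
    exact Fin.ext (by omega)
  have := ((Pi.basisFun ℝ (Fin (k+1))).linearIndependent).comp _ hinj
  have heq : sfam k i = (Pi.basisFun ℝ (Fin (k+1)))
      ∘ (fun t : Fin i => (⟨k - i + 1 + t.val, by omega⟩ : Fin (k+1))) :=
    funext fun t => hg t
  rw [heq]
  exact this

lemma span_vanish {k i : ℕ} (hik : i ≤ k) (v : Fin (k+1) → ℝ)
    (hv : ∀ m : Fin (k+1), m.val + i ≤ k → v m = 0) :
    v ∈ Submodule.span ℝ (Set.range (sfam k i)) := by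
  rw [pi_eq_sum_univ v]
  refine Submodule.sum_mem _ fun j _ => ?_
  by_cases hj : j.val + i ≤ k
  · rw [hv j hj, zero_smul]
    exact Submodule.zero_mem _
  · refine Submodule.smul_mem _ _ (Submodule.subset_span ?_)
    refine ⟨⟨j.val - (k - i + 1), by omega⟩, ?_⟩
    simp only [sfam]
    funext a
    simp only [eN]
    by_cases ha : a = j
    · rw [if_pos (by simp [ha]; omega), if_pos ha.symm]
    · rw [if_neg ?_, if_neg (fun hh => ha hh.symm)]
      intro hh
      exact ha (Fin.ext (by omega))

lemma v_zero_of_span {k i : ℕ} {v : Fin (k+1) → ℝ}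
    (h : v ∈ Submodule.span ℝ (Set.range (sfam k i))) (hik : i ≤ k) : v 0 = 0 := by
  have hle : Submodule.span ℝ (Set.range (sfam k i))
      ≤ LinearMap.ker (LinearMap.proj (R := ℝ) (φ := fun _ : Fin (k+1) => ℝ) 0) := by
    rw [Submodule.span_le]
    rintro w ⟨t, rfl⟩
    simp only [SetLike.mem_coe, LinearMap.mem_ker, LinearMap.proj_apply]
    simp [sfam, eN]
    split_ifs with e
    · omega
    · exact if_neg e
  simpa using hle h

lemma pt_Cset_eq (k i : ℕ) (hi : 1 ≤ i) (hik : i + 1 ≤ k) (x : Fin (k+1) → ℝ) :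
    ptSpan (Cset k i) x = Submodule.span ℝ (Set.range (sfam k i)) := by
  apply le_antisymm
  · rw [ptSpan, Submodule.span_le]
    rintro v ⟨f, hf, rfl⟩
    exact span_vanish (by omega) _ (fun m hm => hf.2 x m hm)
  · rw [Submodule.span_le]
    rintro v ⟨t, rfl⟩
    refine Submodule.subset_span ⟨eN k (k - i + 1 + t.val), eN_mem_Cset (by omega), rfl⟩

lemma finrank_pt_Cset (k i : ℕ) (hi : 1 ≤ i) (hik : i + 1 ≤ k) (x : Fin (k+1) → ℝ) :
    Module.finrank ℝ (ptSpan (Cset k i) x) = i := by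
  rw [pt_Cset_eq k i hi hik x, finrank_span_eq_card (sfam_li k i (by omega))]
  simp

lemma pt_Gset_eq (k i' : ℕ) (hk : i' + 2 ≤ k) (x : Fin (k+1) → ℝ) :
    ptSpan (Gset k i') x
      = Submodule.span ℝ (Set.range (Fin.cons (g0 k x) (sfam k (i'+1)) : Fin (i'+2) → _)) := by
  rw [Fin.range_cons]
  apply le_antisymm
  · rw [ptSpan, Submodule.span_le]
    rintro v ⟨f, ⟨hfs, hfr⟩, rfl⟩
    have hw : f x - (f x 0) • g0 k x ∈ Submodule.span ℝ (Set.range (sfam k (i'+1))) := by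
      refine span_vanish (by omega) _ (fun m hm => ?_)
      simp only [Pi.sub_apply, Pi.smul_apply, smul_eq_mul]
      by_cases hm0 : m.val = 0
      · have : m = 0 := Fin.ext hm0
        rw [this]
        have : g0 k x 0 = 1 := by simp [g0]
        rw [this]
        ring
      · have h1 : f x m = f x 0 * x ⟨m.val + 1, by omega⟩ := by
          have := hfr x m.val (by omega) (by omega)
          simpa using this
        have h2 : g0 k x m = x ⟨m.val + 1, by omega⟩ := by
          simp only [g0]
          rw [if_neg hm0, dif_pos (by omega)]
        rw [h1, h2]
        ring
    have : f x = (f x - (f x 0) • g0 k x) + (f x 0) • g0 k x := by ring_nf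
    rw [SetLike.mem_coe, this]
    exact Submodule.add_mem _
      (Submodule.span_mono (Set.subset_insert _ _) hw)
      (Submodule.smul_mem _ _ (Submodule.subset_span (Set.mem_insert _ _)))
  · rw [Submodule.span_le]
    rintro v (rfl | ⟨t, rfl⟩)
    · exact Submodule.subset_span ⟨g0 k, g0_mem_Gset k i', rfl⟩
    · exact Submodule.subset_span
        ⟨eN k (k - (i'+1) + 1 + t.val), eN_mem_Gset (by omega) (by omega), rfl⟩

lemma finrank_pt_Gset (k i' : ℕ) (hk : i' + 2 ≤ k) (x : Fin (k+1) → ℝ) :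
    Module.finrank ℝ (ptSpan (Gset k i') x) = i' + 2 := by
  rw [pt_Gset_eq k i' hk x]
  have hli : LinearIndependent ℝ (Fin.cons (g0 k x) (sfam k (i'+1)) : Fin (i'+2) → _) := by
    rw [linearIndependent_fin_cons]
    refine ⟨sfam_li k (i'+1) (by omega), fun h => ?_⟩
    have := v_zero_of_span h (by omega)
    simp [g0] at this
  rw [finrank_span_eq_card hli]
  simp


lemma charDist_eq (k i : ℕ) (hi : 1 ≤ i) (hk : i + 2 ≤ k) :
    charDist (derivedFlag {g0 k, g1 k} i) = Cset k i := by
  rw [show derivedFlag {g0 k, g1 k} i = Gset k i from flag_eq k i (by omega)]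
  ext c
  constructor
  · rintro ⟨h1, h2⟩
    exact char_sub_Cset hi hk h1 h2
  · intro hc
    exact ⟨Cset_sub_Gset (by omega) hc, fun f hf => Cset_bracket_right hc hf⟩


end Chained

/-- For the chained form on `ℝ^{k+1}` (`k ≥ 3`), the characteristic
distribution of `G^i` equals `C^i = span{∂/∂z_{k-i+1}, …, ∂/∂z_k}` for `1 ≤ i ≤ k−2`;
in particular `C^i` is involutive, has rank `i`, and `C^i ⊆ G^{i-1}` with corank one. -/
theorem chained_characteristic_distribution (k : ℕ) (hk : 3 ≤ k)
    (i : ℕ) (hi1 : 1 ≤ i) (hi2 : i ≤ k - 2) :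
    charDist (derivedFlag {g0 k, g1 k} i) =
      smoothSpan {f | ∃ j : ℕ, k - i + 1 ≤ j ∧ j ≤ k ∧ f = eN k j} ∧
    (∀ X ∈ charDist (derivedFlag {g0 k, g1 k} i),
      ∀ Y ∈ charDist (derivedFlag {g0 k, g1 k} i),
        bracket X Y ∈ charDist (derivedFlag {g0 k, g1 k} i)) ∧
    (∀ x : Fin (k+1) → ℝ,
      Module.finrank ℝ (ptSpan (charDist (derivedFlag {g0 k, g1 k} i)) x) = i) ∧
    charDist (derivedFlag {g0 k, g1 k} i) ⊆ derivedFlag {g0 k, g1 k} (i - 1) ∧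
    (∀ x : Fin (k+1) → ℝ,
      Module.finrank ℝ (ptSpan (derivedFlag {g0 k, g1 k} (i - 1)) x) = i + 1) := by
  have hik : i + 2 ≤ k := by omega
  obtain ⟨i', rfl⟩ : ∃ i', i = i' + 1 := ⟨i - 1, by omega⟩
  have hchar := Chained.charDist_eq k (i'+1) hi1 hik
  rw [hchar]
  have hflag' : derivedFlag {g0 k, g1 k} (i'+1-1) = Chained.Gset k i' :=
    Chained.flag_eq k i' (by omega)
  refine ⟨Chained.Cset_eq_span k (i'+1) hi1 (by omega), ?_, ?_, ?_, ?_⟩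
  · exact fun X hX Y hY => Chained.Cset_bracket hX hY
  · exact fun x => Chained.finrank_pt_Cset k (i'+1) hi1 (by omega) x
  · rw [hflag']
    exact Chained.Cset_sub_Gset (by omega)
  · intro x
    rw [hflag']
    exact Chained.finrank_pt_Gset k i' (by omega) x
end

section
/- Conversely, let f = Σ_{i=1}^{k-1} f_i(z) ∂/∂z_i be a smooth vector field on ℝ^{k+1} (with arbitrary smooth components f_i). If [f, C^i] ⊆ G^i for all 1 ≤ i ≤ k−2 (with C^i, G^i the characteristic distributions and derived flag of the chained form), then ∂f_i/∂z_j = 0 for all i+2 ≤ j ≤ k and 1 ≤ i ≤ k−2; that is, each f_i depends only on (z₀, …, z_{i+1}). -/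
/-- The explicit characteristic distribution `C^i = span{∂/∂z_{k-i+1}, …, ∂/∂z_k}`. -/
noncomputable def Cexp (k i : ℕ) : Set ((Fin (k+1) → ℝ) → (Fin (k+1) → ℝ)) :=
  smoothSpan {f | ∃ j : ℕ, k - i + 1 ≤ j ∧ j ≤ k ∧ f = eN k j}

/-- The explicit derived-flag member `G^i = span{∂/∂z_{k-i}, …, ∂/∂z_k, g₀}`. -/
noncomputable def Gexp (k i : ℕ) : Set ((Fin (k+1) → ℝ) → (Fin (k+1) → ℝ)) :=
  smoothSpan ({g0 k} ∪ {f | ∃ j : ℕ, k - i ≤ j ∧ j ≤ k ∧ f = eN k j})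

lemma pf_apply {ι : Type} [Fintype ι] [DecidableEq ι]
    (f : (ι → ℝ) → (ι → ℝ)) (hf : Differentiable ℝ f) (x v : ι → ℝ) (m : ι) :
    fderiv ℝ (fun y => f y m) x v = fderiv ℝ f x v m := by
  have h : (fun y => f y m) = (ContinuousLinearMap.proj m (R := ℝ) (φ := fun _ : ι => ℝ)) ∘ f := rfl
  rw [h, fderiv_comp x (ContinuousLinearMap.proj m).differentiableAt (hf x)]
  simp

lemma gexp_invariant (k i : ℕ) (hk : 0 < k) (g : (Fin (k+1) → ℝ) → (Fin (k+1) → ℝ))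
    (hg : g ∈ Gexp k i) :
    ∀ (x : Fin (k+1) → ℝ) (m : Fin (k+1)) (hm1 : 1 ≤ m.val) (hm2 : m.val + i < k),
      g x m = g x ⟨0, by omega⟩ * x ⟨m.val + 1, by omega⟩ := by
  induction hg with
  | of hf0 =>
    rcases hf0 with h0 | ⟨j, hj1, hj2, rfl⟩
    · intro x m hm1 hm2
      simp only [Set.mem_singleton_iff] at h0
      subst h0
      have hmk : m.val < k := by omega
      have hm0 : m.val ≠ 0 := by omega
      simp [g0, hm0, hmk]
    · intro x m hm1 hm2
      have h1 : m.val ≠ j := by omega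
      have h2 : (0 : ℕ) ≠ j := by omega
      simp [eN, h1, h2]
  | zero => intro x m _ _; simp
  | add hf hg ihf ihg =>
    intro x m hm1 hm2
    simp only [Pi.add_apply]
    rw [ihf x m hm1 hm2, ihg x m hm1 hm2]; ring
  | smul h hh hf ih =>
    intro x m hm1 hm2
    beta_reduce
    rw [ih x m hm1 hm2]; ring

/-- Conversely, if `f = Σ_{i=1}^{k-1} f_i(z) ∂/∂z_i` satisfies
`[f, C^i] ⊆ G^i` for all `1 ≤ i ≤ k−2`, then `∂f_i/∂z_j = 0` for all
`i+2 ≤ j ≤ k` and `1 ≤ i ≤ k−2`: each `f_i` depends only on `(z₀, …, z_{i+1})`. -/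
theorem compatibility_implies_triangular (k : ℕ) (hk : 3 ≤ k)
    (f : (Fin (k+1) → ℝ) → (Fin (k+1) → ℝ)) (hf : ContDiff ℝ (⊤ : ℕ∞) f)
    (hf0 : ∀ x : Fin (k+1) → ℝ, ∀ i : Fin (k+1), i.val = 0 ∨ i.val = k → f x i = 0)
    (hcomp : ∀ i : ℕ, 1 ≤ i → i ≤ k - 2 → ∀ c ∈ Cexp k i, bracket f c ∈ Gexp k i) :
    ∀ i j : ℕ, ∀ (hi1 : 1 ≤ i) (hi2 : i ≤ k - 2) (hj1 : i + 2 ≤ j) (hj2 : j ≤ k),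
      ∀ x : Fin (k+1) → ℝ,
        fderiv ℝ (fun y => f y ⟨i, by omega⟩) x (Pi.single (⟨j, by omega⟩ : Fin (k+1)) 1)
          = 0 := by
  intro i j hi1 hi2 hj1 hj2 x
  -- choose the level i' = k - j + 1
  set i' : ℕ := k - j + 1 with hi'
  have hi'1 : 1 ≤ i' := by omega
  have hi'2 : i' ≤ k - 2 := by omega
  have hcmem : eN k j ∈ Cexp k i' := SmoothSpan.of ⟨j, by omega, hj2, rfl⟩
  have hgmem := hcomp i' hi'1 hi'2 (eN k j) hcmem
  -- compute the bracket
  have heconst : (eN k j) = fun _ => (fun m : Fin (k+1) => if m.val = j then 1 else 0) := rfl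
  have hbr : ∀ y : Fin (k+1) → ℝ,
      bracket f (eN k j) y = -(fderiv ℝ f y (eN k j y)) := by
    intro y
    unfold bracket
    rw [heconst, fderiv_fun_const]
    simp
  have hdf : Differentiable ℝ f := hf.differentiable (by simp)
  -- component 0 of the bracket vanishes
  have hcomp0 : ∀ y : Fin (k+1) → ℝ, bracket f (eN k j) y ⟨0, by omega⟩ = 0 := by
    intro y
    rw [hbr y]
    have h0 : (fun z => f z (⟨0, by omega⟩ : Fin (k+1))) = fun _ => (0 : ℝ) := by
      funext z; exact hf0 z _ (Or.inl rfl)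
    have := pf_apply f hdf y (eN k j y) ⟨0, by omega⟩
    rw [h0] at this
    simp only [Pi.neg_apply]
    rw [← this]
    simp
  -- apply the invariant
  have hmlt : i + i' < k := by omega
  have hinv := gexp_invariant k i' (by omega) _ hgmem x ⟨i, by omega⟩ hi1 hmlt
  rw [hcomp0 x, zero_mul] at hinv
  have hEi : bracket f (eN k j) x ⟨i, by omega⟩ = 0 := hinv
  rw [hbr x] at hEi
  have hsingle : eN k j x = Pi.single (⟨j, by omega⟩ : Fin (k+1)) 1 := by
    funext m
    simp [eN, Pi.single_apply, Fin.ext_iff]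
  rw [pf_apply f hdf x _ ⟨i, by omega⟩, ← hsingle]
  simp only [Pi.neg_apply, neg_eq_zero] at hEi
  exact hEi
end

section
/- Let f = Σ_{ℓ=1}^{m} Σ_{j=1}^{k-1} f^j_ℓ(z) ∂/∂z^j_ℓ be a smooth drift on ℝ^{km+1} (m ≥ 2). Then [f, C^i] ⊆ G^i holds for all 1 ≤ i ≤ k−2 if and only if each component f^j_ℓ depends only on the variables z₀ and z^s_r with 1 ≤ s ≤ j+1, 1 ≤ r ≤ m (i.e. ∂f^j_ℓ/∂z^s_r = 0 for s ≥ j+2). -/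
/-- Coordinate index set for `ℝ^{km+1}`: `none` is `z₀`, `some (j, i)` is `z^{j+1}_{i+1}`. -/
abbrev MIdx (k m : ℕ) := Option (Fin k × Fin m)

/-- `g₀ = ∂/∂z₀ + Σ_{j=1}^{m} Σ_{i=1}^{k-1} z^{i+1}_j ∂/∂z^i_j` on `ℝ^{km+1}`. -/
noncomputable def g0m (k m : ℕ) : (MIdx k m → ℝ) → (MIdx k m → ℝ) :=
  fun x i =>
    match i with
    | none => 1
    | some (j, l) => if h : j.val + 1 < k then x (some (⟨j.val + 1, h⟩, l)) else 0

/-- `g_l = ∂/∂z^k_l` on `ℝ^{km+1}`. -/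
noncomputable def gm (k m : ℕ) (l : Fin m) : (MIdx k m → ℝ) → (MIdx k m → ℝ) :=
  fun _ i =>
    match i with
    | none => 0
    | some (j, r) => if j.val = k - 1 ∧ r = l then 1 else 0

/-- The coordinate vector field `∂/∂z^{j+1}_{l+1}` on `ℝ^{km+1}`. -/
noncomputable def eM (k m : ℕ) (j : Fin k) (l : Fin m) : (MIdx k m → ℝ) → (MIdx k m → ℝ) :=
  fun _ i => if i = some (j, l) then 1 else 0

/-- The set of controlled vector fields `{g₀, g₁, …, g_m}` of the `m`-chained form. -/
noncomputable def GsetM (k m : ℕ) : Set ((MIdx k m → ℝ) → (MIdx k m → ℝ)) :=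
  {g0m k m} ∪ {f | ∃ l : Fin m, f = gm k m l}

/-- The explicit characteristic distribution `C^i = span{∂/∂z^{k-i+1}, …, ∂/∂z^k}`. -/
noncomputable def CexpM (k m i : ℕ) : Set ((MIdx k m → ℝ) → (MIdx k m → ℝ)) :=
  smoothSpan {f | ∃ j : Fin k, ∃ l : Fin m, k - i ≤ j.val ∧ f = eM k m j l}

/-- The explicit derived-flag member `G^i = span{∂/∂z^{k-i}, …, ∂/∂z^k, g₀}`. -/
noncomputable def GexpM (k m i : ℕ) : Set ((MIdx k m → ℝ) → (MIdx k m → ℝ)) :=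
  smoothSpan ({g0m k m} ∪ {f | ∃ j : Fin k, ∃ l : Fin m, k - 1 - i ≤ j.val ∧ f = eM k m j l})
section Helpers

variable {ι : Type} [Fintype ι] [DecidableEq ι]

lemma SmoothSpan.mono {S T : Set ((ι → ℝ) → (ι → ℝ))} (hST : S ⊆ T)
    {c : (ι → ℝ) → (ι → ℝ)} (hc : SmoothSpan S c) : SmoothSpan T c := by
  induction hc with
  | of hf => exact .of (hST hf)
  | zero => exact .zero
  | add _ _ ih1 ih2 => exact .add ih1 ih2
  | smul h hh _ ih => exact .smul h hh ih

lemma SmoothSpan.contDiff {S : Set ((ι → ℝ) → (ι → ℝ))}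
    (hS : ∀ g ∈ S, ContDiff ℝ (⊤ : ℕ∞) g) {c : (ι → ℝ) → (ι → ℝ)}
    (hc : SmoothSpan S c) : ContDiff ℝ (⊤ : ℕ∞) c := by
  induction hc with
  | of hf => exact hS _ hf
  | zero => exact contDiff_const
  | add _ _ ih1 ih2 => exact ih1.add ih2
  | smul h hh _ ih => exact hh.smul ih

lemma SmoothSpan.apply_mem_span {S : Set ((ι → ℝ) → (ι → ℝ))}
    {c : (ι → ℝ) → (ι → ℝ)} (hc : SmoothSpan S c) (x : ι → ℝ) :
    c x ∈ Submodule.span ℝ {v | ∃ g ∈ S, g x = v} := by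
  induction hc with
  | of hf => exact Submodule.subset_span ⟨_, hf, rfl⟩
  | zero => exact zero_mem _
  | add _ _ ih1 ih2 => exact add_mem ih1 ih2
  | smul h hh _ ih => exact Submodule.smul_mem _ (h x) ih

lemma fderiv_apply_idx {f : (ι → ℝ) → (ι → ℝ)} (hf : Differentiable ℝ f)
    (x v : ι → ℝ) (idx : ι) :
    fderiv ℝ (fun y => f y idx) x v = fderiv ℝ f x v idx := by
  have h2 : HasFDerivAt (fun y => f y idx)
      ((ContinuousLinearMap.proj (R := ℝ) (φ := fun _ : ι => ℝ) idx).comp (fderiv ℝ f x)) x :=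
    (ContinuousLinearMap.proj (R := ℝ) (φ := fun _ : ι => ℝ) idx).hasFDerivAt.comp x (hf x).hasFDerivAt
  rw [h2.fderiv]; rfl

lemma smoothSpan_of_components (S : Set ((ι → ℝ) → (ι → ℝ))) (X : (ι → ℝ) → (ι → ℝ))
    (hs : ∀ idx, ContDiff ℝ (⊤ : ℕ∞) fun x => X x idx)
    (h : ∀ idx : ι, (∀ x, X x idx = 0) ∨
      ((fun (_ : ι → ℝ) (i : ι) => if i = idx then (1:ℝ) else 0) ∈ S)) :
    SmoothSpan S X := by
  have key : ∀ F : Finset ι,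
      SmoothSpan S (fun x i => ∑ idx ∈ F, if i = idx then X x idx else 0) := by
    intro F
    induction F using Finset.induction with
    | empty => simp only [Finset.sum_empty]; exact .zero
    | @insert a F ha ih =>
      have heq : (fun (x : ι → ℝ) (i : ι) => ∑ idx ∈ insert a F, if i = idx then X x idx else 0)
          = fun x => (fun i => X x a * (if i = a then (1:ℝ) else 0)) +
              (fun i => ∑ idx ∈ F, if i = idx then X x idx else 0) := by
        funext x i
        rw [Finset.sum_insert ha, Pi.add_apply]
        by_cases hi : i = a <;> simp [hi]
      rw [heq]
      refine SmoothSpan.add ?_ ih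
      rcases h a with hz | hgen
      · have : (fun (x : ι → ℝ) (i : ι) => X x a * (if i = a then (1:ℝ) else 0))
            = fun _ _ => (0:ℝ) := by
          funext x i; rw [hz x, zero_mul]
        rw [this]; exact .zero
      · exact SmoothSpan.smul (fun x => X x a) (hs a) (.of hgen)
  have : X = fun x i => ∑ idx ∈ Finset.univ, if i = idx then X x idx else 0 := by
    funext x i
    rw [Finset.sum_ite_eq]
    simp
  rw [this]
  exact key Finset.univ

lemma bracket_const {f : (ι → ℝ) → (ι → ℝ)} (v : ι → ℝ) :
    bracket f (fun _ => v) = fun x => -(fderiv ℝ f x v) := by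
  funext x
  simp only [bracket, fderiv_fun_const, Pi.zero_apply, ContinuousLinearMap.zero_apply, zero_sub]

end Helpers


/-- A drift `f = Σ_{ℓ=1}^{m} Σ_{j=1}^{k-1} f^j_ℓ(z) ∂/∂z^j_ℓ` on
`ℝ^{km+1}` satisfies `[f, C^i] ⊆ G^i` for all `1 ≤ i ≤ k−2` if and only if each
component `f^j_ℓ` depends only on `z₀` and `z^s_r` with `s ≤ j+1`, i.e.
`∂f^j_ℓ/∂z^s_r = 0` for `s ≥ j+2`. -/
theorem m_compatibility_iff_triangular (k m : ℕ) (hk : 2 ≤ k) (hm : 2 ≤ m)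
    (f : (MIdx k m → ℝ) → (MIdx k m → ℝ)) (hf : ContDiff ℝ (⊤ : ℕ∞) f)
    (hf0 : ∀ x : MIdx k m → ℝ, f x none = 0)
    (hftop : ∀ x : MIdx k m → ℝ, ∀ j : Fin k, ∀ l : Fin m,
      j.val = k - 1 → f x (some (j, l)) = 0) :
    (∀ i : ℕ, 1 ≤ i → i ≤ k - 2 → ∀ c ∈ CexpM k m i, bracket f c ∈ GexpM k m i) ↔
    (∀ (j : Fin k) (l : Fin m) (s : Fin k) (r : Fin m), j.val + 2 ≤ s.val →
      ∀ x : MIdx k m → ℝ,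
        fderiv ℝ (fun y => f y (some (j, l))) x (Pi.single (some (s, r)) 1) = 0) := by
  have hfd : Differentiable ℝ f := hf.differentiable (by simp)
  have hbr : ∀ (s : Fin k) (r : Fin m),
      bracket f (eM k m s r)
        = fun y => -(fderiv ℝ f y (fun i => if i = some (s, r) then (1:ℝ) else 0)) := by
    intro s r
    have e1 : eM k m s r
        = fun _ => (fun i : MIdx k m => if i = some (s, r) then (1:ℝ) else 0) := rfl
    rw [e1, bracket_const]
  have hsingle : ∀ (s : Fin k) (r : Fin m),
      (Pi.single (some (s, r)) (1:ℝ) : MIdx k m → ℝ)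
        = fun i => if i = some (s, r) then (1:ℝ) else 0 := by
    intro s r; funext i; simp [Pi.single_apply]
  constructor
  · -- compatibility → triangularity
    intro H j l s r hjs x
    have hsk : s.val < k := s.isLt
    set i : ℕ := k - s.val with hi
    have hi1 : 1 ≤ i := by omega
    have hi2 : i ≤ k - 2 := by omega
    have hjk : j.val + 1 < k := by omega
    have hc : (eM k m s r) ∈ CexpM k m i :=
      SmoothSpan.of ⟨s, r, by omega, rfl⟩
    have hX : SmoothSpan
        ({g0m k m} ∪ {g | ∃ j' : Fin k, ∃ l' : Fin m, k - 1 - i ≤ j'.val ∧ g = eM k m j' l'})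
        (bracket f (eM k m s r)) := H i hi1 hi2 _ hc
    have hval := hX.apply_mem_span x
    have key : ∀ v ∈ Submodule.span ℝ
        {v | ∃ g ∈ ({g0m k m} ∪
          {g | ∃ j' : Fin k, ∃ l' : Fin m, k - 1 - i ≤ j'.val ∧ g = eM k m j' l'}), g x = v},
        v (some (j, l)) = x (some (⟨j.val + 1, hjk⟩, l)) * v none := by
      intro v hv
      induction hv using Submodule.span_induction with
      | mem w hw =>
        obtain ⟨g, hg, rfl⟩ := hw
        rcases hg with hg | ⟨j', l', hj', rfl⟩
        · simp only [Set.mem_singleton_iff] at hg; subst hg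
          simp [g0m, hjk]
        · have hne : (some (j, l) : MIdx k m) ≠ some (j', l') := by
            intro hcon
            have h1 : j = j' := (Prod.mk.injEq _ _ _ _ ▸ Option.some_injective _ hcon).1
            have : j.val = j'.val := by rw [h1]
            omega
          simp [eM, hne]
      | zero => simp
      | add a b ha hb iha ihb => simp only [Pi.add_apply, iha, ihb]; ring
      | smul t a ha iha => simp only [Pi.smul_apply, smul_eq_mul, iha]; ring
    have h1 := key _ hval
    rw [hbr s r] at h1
    have hnone : fderiv ℝ f x (fun i => if i = some (s, r) then (1:ℝ) else 0) none = 0 := by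
      rw [← fderiv_apply_idx hfd]
      have : (fun y : MIdx k m → ℝ => f y none) = fun _ => (0:ℝ) := funext hf0
      rw [this, fderiv_const_apply]
      rfl
    rw [hsingle, fderiv_apply_idx hfd]
    simp only [Pi.neg_apply, hnone, neg_zero, mul_zero, neg_eq_zero] at h1
    exact h1
  · -- triangularity → compatibility
    intro H i hi1 hi2 c hc
    have hc' : SmoothSpan {g | ∃ j : Fin k, ∃ l : Fin m, k - i ≤ j.val ∧ g = eM k m j l} c := hc
    have hCgen : ∀ g ∈ {g | ∃ j : Fin k, ∃ l : Fin m, k - i ≤ j.val ∧ g = eM k m j l},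
        ContDiff ℝ (⊤ : ℕ∞) g := by
      rintro g ⟨j', l', -, rfl⟩
      exact contDiff_const
    have hsub : {g | ∃ j : Fin k, ∃ l : Fin m, k - i ≤ j.val ∧ g = eM k m j l} ⊆
        ({g0m k m} ∪ {g | ∃ j : Fin k, ∃ l : Fin m, k - 1 - i ≤ j.val ∧ g = eM k m j l}) := by
      rintro g ⟨j', l', hj', rfl⟩
      exact Or.inr ⟨j', l', by omega, rfl⟩
    show SmoothSpan _ (bracket f c)
    induction hc' with
    | of hg =>
      obtain ⟨s, r, hsi, rfl⟩ := hg
      rw [hbr s r]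
      apply smoothSpan_of_components
      · intro idx
        have hsm : ContDiff ℝ (⊤ : ℕ∞)
            (fun x => fderiv ℝ f x (fun i => if i = some (s, r) then (1:ℝ) else 0)) :=
          (hf.fderiv_right (by exact_mod_cast le_top)).clm_apply contDiff_const
        exact ((contDiff_pi.mp hsm) idx).neg
      · intro idx
        match idx with
        | none =>
          left
          intro x
          have : fderiv ℝ f x (fun i => if i = some (s, r) then (1:ℝ) else 0) none = 0 := by
            rw [← fderiv_apply_idx hfd]
            have : (fun y : MIdx k m → ℝ => f y none) = fun _ => (0:ℝ) := funext hf0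
            rw [this, fderiv_const_apply]; rfl
          simp [this]
        | some (j, l) =>
          by_cases hcase : j.val + 2 ≤ s.val
          · left
            intro x
            have h0 := H j l s r hcase x
            rw [hsingle, fderiv_apply_idx hfd] at h0
            simp [h0]
          · right
            exact Or.inr ⟨j, l, by omega, rfl⟩
    | zero =>
      have hz : bracket f (fun _ _ => 0) = fun _ _ => (0:ℝ) := by
        funext x idx
        show (fderiv ℝ (fun _ : MIdx k m → ℝ => (0 : MIdx k m → ℝ)) x (f x)
            - fderiv ℝ f x (0 : MIdx k m → ℝ)) idx = 0
        rw [fderiv_const_apply, map_zero]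
        simp
      rw [hz]
      exact SmoothSpan.zero
    | @add c1 c2 hc1 hc2 ih1 ih2 =>
      have hd1 : Differentiable ℝ c1 := (hc1.contDiff hCgen).differentiable (by simp)
      have hd2 : Differentiable ℝ c2 := (hc2.contDiff hCgen).differentiable (by simp)
      have heq : bracket f (fun x => c1 x + c2 x)
          = fun x => bracket f c1 x + bracket f c2 x := by
        funext x
        simp only [bracket]
        rw [fderiv_fun_add (hd1 x) (hd2 x)]
        simp only [ContinuousLinearMap.add_apply, map_add]
        abel
      rw [heq]
      exact SmoothSpan.add (ih1 hc1) (ih2 hc2)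
    | @smul h hh c1 hc1 ih =>
      have hd1 : Differentiable ℝ c1 := (hc1.contDiff hCgen).differentiable (by simp)
      have hdh : Differentiable ℝ h := hh.differentiable (by simp)
      have heq : bracket f (fun x i => h x * c1 x i)
          = fun x => (fun i => h x * bracket f c1 x i)
              + (fun i => fderiv ℝ h x (f x) * c1 x i) := by
        funext x
        simp only [bracket]
        rw [show (fun (x : MIdx k m → ℝ) (i : MIdx k m) => h x * c1 x i)
            = fun y => h y • c1 y from rfl]
        rw [fderiv_fun_smul (hdh x) (hd1 x)]
        have e2 : (fderiv ℝ f x) (fun i => h x * c1 x i) = h x • (fderiv ℝ f x) (c1 x) :=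
          map_smul (fderiv ℝ f x) (h x) (c1 x)
        funext idx
        rw [Pi.sub_apply, e2]
        simp only [ContinuousLinearMap.add_apply, ContinuousLinearMap.coe_smul',
          Pi.smul_apply, ContinuousLinearMap.smulRight_apply, map_smul,
          Pi.add_apply, Pi.sub_apply, smul_eq_mul]
        ring
      rw [heq]
      exact SmoothSpan.add (SmoothSpan.smul h hh (ih hc1))
        (SmoothSpan.smul (fun x => fderiv ℝ h x (f x))
          ((hh.fderiv_right (by simp)).clm_apply hf) (hc1.mono hsub))
end

section
/- Consider the system ż₀ = v₀, ż₁ = z₀ + z₂v₀, ż_i = z_{i+1}v₀ for 2 ≤ i ≤ k−1, ż_k = v₁ on ℝ^{k+1}. Then (φ₀, φ₁) = (z₁ − z₀z₂, z₂) is an x-flat output near z* = 0 for controls with v₀* ≠ 0 and 1 − z₃* v₀* ≠ 0: along trajectories, φ̇₀ = z₀(1 − φ̇₁) so z₀ = φ̇₀/(1 − φ̇₁), v₀ = d/dt(φ̇₀/(1 − φ̇₁)), z₃ = φ̇₁/v₀, and successively z_{j+1} = ż_j/v₀ for 3 ≤ j ≤ k−1 and v₁ = ż_k; hence all states and controls are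 smooth functions of (φ₀, φ₁) and their time-derivatives. -/
open scoped Topology

/-- For the system `ż₀ = v₀`, `ż₁ = z₀ + z₂v₀`,
`ż_i = z_{i+1}v₀` (`2 ≤ i ≤ k−1`), `ż_k = v₁` on `ℝ^{k+1}`, the pair
`(φ₀, φ₁) = (z₁ − z₀z₂, z₂)` is an x-flat output near points with `v₀ ≠ 0` and
`1 − z₃v₀ ≠ 0`: along trajectories `φ̇₀ = z₀(1 − φ̇₁)`, so `z₀ = φ̇₀/(1 − φ̇₁)`,
`v₀ = d/dt(φ̇₀/(1 − φ̇₁))`, `z₃ = φ̇₁/v₀`, `z_{j+1} = ż_j/v₀` for `3 ≤ j ≤ k−1`,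
and `v₁ = ż_k`; hence all states and controls are smooth functions of
`(φ₀, φ₁)` and their time-derivatives. -/
theorem example_flat_output_z1_minus_z0z2 (k : ℕ) (hk : 3 ≤ k)
    (z : ℝ → Fin (k+1) → ℝ) (v0 v1 : ℝ → ℝ)
    (hz : ∀ i : Fin (k+1), ContDiff ℝ (⊤ : ℕ∞) (fun t => z t i))
    (hv0 : ContDiff ℝ (⊤ : ℕ∞) v0) (hv1 : ContDiff ℝ (⊤ : ℕ∞) v1)
    (ode0 : ∀ t, deriv (fun s => z s ⟨0, by omega⟩) t = v0 t)
    (ode1 : ∀ t, deriv (fun s => z s ⟨1, by omega⟩) t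
      = z t ⟨0, by omega⟩ + z t ⟨2, by omega⟩ * v0 t)
    (odei : ∀ i : ℕ, ∀ (hi1 : 2 ≤ i) (hi2 : i ≤ k - 1), ∀ t,
      deriv (fun s => z s ⟨i, by omega⟩) t = z t ⟨i + 1, by omega⟩ * v0 t)
    (odek : ∀ t, deriv (fun s => z s ⟨k, by omega⟩) t = v1 t) :
    -- the flat output along the trajectory
    ∀ φ₀ φ₁ : ℝ → ℝ,
      φ₀ = (fun t => z t ⟨1, by omega⟩ - z t ⟨0, by omega⟩ * z t ⟨2, by omega⟩) →
      φ₁ = (fun t => z t ⟨2, by omega⟩) →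
      -- the key identity
      (∀ t, deriv φ₀ t = z t ⟨0, by omega⟩ * (1 - deriv φ₁ t)) ∧
      -- the recovery of states and controls at regular points
      (∀ t, v0 t ≠ 0 → 1 - z t ⟨3, by omega⟩ * v0 t ≠ 0 →
        (z t ⟨0, by omega⟩ = deriv φ₀ t / (1 - deriv φ₁ t) ∧
         z t ⟨3, by omega⟩ = deriv φ₁ t / v0 t ∧
         (∀ j : ℕ, ∀ (hj1 : 3 ≤ j) (hj2 : j ≤ k - 1),
           z t ⟨j + 1, by omega⟩ = deriv (fun s => z s ⟨j, by omega⟩) t / v0 t) ∧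
         v1 t = deriv (fun s => z s ⟨k, by omega⟩) t ∧
         ((∀ᶠ s in 𝓝 t, 1 - z s ⟨3, by omega⟩ * v0 s ≠ 0) →
           v0 t = deriv (fun s => deriv φ₀ s / (1 - deriv φ₁ s)) t))) := by

  intro φ₀ φ₁ h0 h1
  have hz0 := ((hz ⟨0, by omega⟩).differentiable (by simp))
  have hz1 := ((hz ⟨1, by omega⟩).differentiable (by simp))
  have hz2 := ((hz ⟨2, by omega⟩).differentiable (by simp))
  have d2 : ∀ t, deriv (fun s => z s (⟨2, by omega⟩ : Fin (k+1))) t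
      = z t ⟨3, by omega⟩ * v0 t := by
    intro t
    exact odei 2 le_rfl (by omega) t
  have hd1 : ∀ t, deriv φ₁ t = z t ⟨3, by omega⟩ * v0 t := by
    intro t; rw [h1]; exact d2 t
  have key : ∀ t, deriv φ₀ t = z t ⟨0, by omega⟩ * (1 - deriv φ₁ t) := by
    intro t
    rw [h0, hd1 t]
    rw [deriv_fun_sub (hz1 t) ((hz0 t).fun_mul (hz2 t)),
        deriv_fun_mul (hz0 t) (hz2 t), ode0, ode1, d2]
    ring
  refine ⟨key, ?_⟩
  intro t hv hden
  have hden' : 1 - deriv φ₁ t ≠ 0 := by rw [hd1 t]; exact hden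
  refine ⟨?_, ?_, ?_, ?_, ?_⟩
  · rw [key t, mul_div_assoc, div_self hden', mul_one]
  · rw [hd1 t, mul_div_assoc, div_self hv, mul_one]
  · intro j hj1 hj2
    rw [odei j (by omega) hj2 t, mul_div_assoc, div_self hv, mul_one]
  · rw [odek t]
  · intro hnb
    have heq : (fun s => deriv φ₀ s / (1 - deriv φ₁ s))
        =ᶠ[nhds t] (fun s => z s (⟨0, by omega⟩ : Fin (k+1))) := by
      filter_upwards [hnb] with s hs
      have hs' : 1 - deriv φ₁ s ≠ 0 := by rw [hd1 s]; exact hs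
      rw [key s, mul_div_assoc, div_self hs', mul_one]
    rw [heq.deriv_eq, ode0]
end
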